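/- arXiv:2105.05660 — 4 statements merged into one kernel-verified Lean document; each statement's English description precedes it below -/
import Mathlib

section
/- For every complex number q with 0 < |q| < 1, the shifted 5-cycle graph series satisfies Σ_{n₁,…,n₅ ≥ 0} q^{n₁n₂+n₁n₅+n₂n₃+n₃n₄+n₄n₅+n₁+2n₂+n₃+n₄+2n₅} / ((q)_{n₁}(q)_{n₂}(q)_{n₃}(q)_{n₄}(q)_{n₅}) = q^{-2}/(q)_∞² · Σ_{n≥1} n·q^{2n}/(1 - q^n). -/
/-- The finite q-Pochhammer symbol `(q)_n = ∏_{j=1}^n (1 - q^j)`. -/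
noncomputable def qp (q : ℂ) (n : ℕ) : ℂ := ∏ j ∈ Finset.range n, (1 - q ^ (j + 1))

/-- The infinite q-Pochhammer symbol `(q)_∞ = ∏_{j=1}^∞ (1 - q^j)`. -/
noncomputable def qpInf (q : ℂ) : ℂ := ∏' j : ℕ, (1 - q ^ (j + 1))

/-!
Sum over `n₁` and `n₃` first: each occurs in the exponent as `n (k + 1)`, with `k` the sum of its
two neighbours on the 5-cycle, so Euler's identity `∑ xⁿ / (q)ₙ = 1 / (x; q)_∞` at `x = q^(k+1)`
turns it into `(q)_k / (q)_∞`. The `n₄`-sum is then the `q`-binomial series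
`∑ [n₄ + n₂, n₄]_q q^(n₄ (n₅ + 1)) = (q)_{n₅} / (q)_{n₂+n₅+1}`, which leaves
`q^(2 m) / ((q)_∞² (1 - q^(m+1)))` with `m = n₂ + n₅`; there are `m + 1` such pairs.
Euler's identity is the `k → ∞` limit of the `q`-binomial theorem
`∑ [n + k, n]_q xⁿ = 1 / (x; q)_{k+1}` by dominated convergence, using that `|(q)ₙ|` is bounded
above and away from zero; the same bounds give the absolute convergence that justifies summing in
this order.
-/

open Filter Finset Topology

lemma prod_range_le_tprod_of_one_le {f : ℕ → ℝ} (hf : Multipliable f) (hf1 : ∀ j, 1 ≤ f j)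
    (n : ℕ) : ∏ j ∈ range n, f j ≤ ∏' j, f j := by
  refine Monotone.ge_of_tendsto (monotone_nat_of_le_succ fun n => ?_) hf.hasProd.tendsto_prod_nat n
  rw [prod_range_succ]
  exact le_mul_of_one_le_right (prod_nonneg fun j _ => zero_le_one.trans (hf1 j)) (hf1 n)

lemma tprod_le_prod_range_of_le_one {f : ℕ → ℝ} (hf : Multipliable f) (hf0 : ∀ j, 0 ≤ f j)
    (hf1 : ∀ j, f j ≤ 1) (n : ℕ) : ∏' j, f j ≤ ∏ j ∈ range n, f j := by
  refine Antitone.le_of_tendsto (antitone_nat_of_succ_le fun n => ?_) hf.hasProd.tendsto_prod_nat n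
  rw [prod_range_succ]
  exact mul_le_of_le_one_right (prod_nonneg fun j _ => hf0 j) (hf1 n)

lemma one_sub_mul_pow_ne_zero {x q : ℂ} (hx : ‖x‖ < 1) (hq : ‖q‖ ≤ 1) (j : ℕ) :
    1 - x * q ^ j ≠ 0 := by
  have hlt : ‖x * q ^ j‖ < 1 := by
    rw [norm_mul, norm_pow]
    exact hx.trans_le' (mul_le_of_le_one_right (norm_nonneg x) (pow_le_one₀ (norm_nonneg q) hq))
  rw [sub_ne_zero]
  exact fun h => hlt.ne (by rw [← h, norm_one])

lemma Summable.tsum_prod₅ {α β γ δ ε E : Type*} [NormedAddCommGroup E] [CompleteSpace E]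
    {f : α × β × γ × δ × ε → E} (hf : Summable f) :
    ∑' p, f p = ∑' (a) (b) (c) (d) (e), f (a, b, c, d, e) := by
  rw [hf.tsum_prod]
  refine tsum_congr fun a => ?_
  have ha := hf.prod_factor a
  rw [ha.tsum_prod]
  refine tsum_congr fun b => ?_
  have hb := ha.prod_factor b
  rw [hb.tsum_prod]
  exact tsum_congr fun c => (hb.prod_factor c).tsum_prod

lemma tsum_tsum_nat_add {E : Type*} [NormedAddCommGroup E] [CompleteSpace E] {g : ℕ → E}
    (hg : Summable fun p : ℕ × ℕ => g (p.1 + p.2)) :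
    ∑' (a) (b), g (a + b) = ∑' m, (m + 1) • g m := by
  let σ := HasAntidiagonal.sigmaAntidiagonalEquivProd (A := ℕ)
  have hσ : Summable fun s => g ((σ s).1 + (σ s).2) := σ.summable_iff.2 hg
  rw [← hg.tsum_prod, ← σ.tsum_eq, hσ.tsum_sigma]
  refine tsum_congr fun m => ?_
  calc ∑' p : antidiagonal m, g ((σ ⟨m, p⟩).1 + (σ ⟨m, p⟩).2)
      = ∑' _ : antidiagonal m, g m := tsum_congr fun p => congrArg g (mem_antidiagonal.1 p.2)
    _ = (m + 1) • g m := by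
      rw [tsum_fintype, sum_const, card_univ, Fintype.card_coe, Nat.card_antidiagonal]

lemma summable_nat_add_of_norm_le {E : Type*} [NormedAddCommGroup E] [CompleteSpace E]
    {g : ℕ → E} {K r : ℝ} (hr0 : 0 ≤ r) (hr : r < 1) (hg : ∀ m, ‖g m‖ ≤ K * r ^ m) :
    Summable fun p : ℕ × ℕ => g (p.1 + p.2) := by
  have hgeo := summable_geometric_of_lt_one hr0 hr
  refine .of_norm_bounded ((hgeo.mul_of_nonneg hgeo (fun _ => by positivity)
    (fun _ => by positivity)).mul_left K) fun p => ?_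
  simpa only [pow_add, mul_assoc] using hg (p.1 + p.2)

def c5Reorder (α : Type*) : (α × α × α × α × α) ≃ (α × α × α × α × α) where
  toFun := fun (a, b, c, d, e) => (e, a, d, c, b)
  invFun := fun (n₁, n₂, n₃, n₄, n₅) => (n₂, n₅, n₄, n₃, n₁)
  left_inv _ := rfl
  right_inv _ := rfl

section
variable {q : ℂ}

@[simp]
lemma qp_zero : qp q 0 = 1 :=
  prod_range_zero _

lemma qp_succ (n : ℕ) : qp q (n + 1) = qp q n * (1 - q ^ (n + 1)) :=
  prod_range_succ _ _

lemma qp_add (m k : ℕ) : qp q (m + k) = qp q m * ∏ j ∈ range k, (1 - q ^ (m + 1) * q ^ j) := by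
  simp only [qp, prod_range_add, ← pow_add]
  congr 2 with j
  ring_nf

lemma one_sub_pow_succ_ne_zero (hq : ‖q‖ < 1) (n : ℕ) : 1 - q ^ (n + 1) ≠ 0 :=
  pow_succ' q n ▸ one_sub_mul_pow_ne_zero hq hq.le n

lemma qp_ne_zero (hq : ‖q‖ < 1) (n : ℕ) : qp q n ≠ 0 :=
  prod_ne_zero_iff.2 fun j _ => one_sub_pow_succ_ne_zero hq j

lemma multipliable_one_sub_mul_pow (hq : ‖q‖ < 1) (x : ℂ) :
    Multipliable fun j : ℕ => 1 - x * q ^ j := by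
  simpa [sub_eq_add_neg] using multipliable_one_add_of_summable (f := fun j : ℕ => -(x * q ^ j))
    (by simpa [norm_mul, norm_pow] using
      (summable_geometric_of_lt_one (norm_nonneg q) hq).mul_left ‖x‖)

lemma tprod_one_sub_mul_pow_ne_zero (hq : ‖q‖ < 1) {x : ℂ} (hx : ‖x‖ < 1) :
    ∏' j : ℕ, (1 - x * q ^ j) ≠ 0 := by
  simpa [sub_eq_add_neg] using tprod_one_add_ne_zero_of_summable (f := fun j : ℕ => -(x * q ^ j))
    (by simpa [sub_eq_add_neg] using one_sub_mul_pow_ne_zero hx hq.le)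
    (by simpa [norm_mul, norm_pow] using
      (summable_geometric_of_lt_one (norm_nonneg q) hq).mul_left ‖x‖)

lemma tendsto_qp (hq : ‖q‖ < 1) : Tendsto (qp q) atTop (𝓝 (qpInf q)) :=
  (ModularForm.multipliable_one_sub_pow hq).hasProd.tendsto_prod_nat

lemma qpInf_eq_qp_mul_tprod (hq : ‖q‖ < 1) (m : ℕ) :
    qpInf q = qp q m * ∏' j : ℕ, (1 - q ^ (m + 1) * q ^ j) := by
  refine tendsto_nhds_unique
    ((tendsto_qp hq).comp (tendsto_atTop_mono (Nat.le_add_left · m) tendsto_id)) ?_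
  simpa only [Function.comp_def, qp_add] using
    ((multipliable_one_sub_mul_pow hq _).hasProd.tendsto_prod_nat).const_mul (qp q m)

lemma qpInf_ne_zero (hq : ‖q‖ < 1) : qpInf q ≠ 0 := by
  rw [qpInf_eq_qp_mul_tprod hq 0]
  exact mul_ne_zero (qp_ne_zero hq 0) (tprod_one_sub_mul_pow_ne_zero hq (by simpa using hq))

lemma exists_norm_qp_bounds (hq : ‖q‖ < 1) :
    ∃ c C : ℝ, 0 < c ∧ ∀ n, c ≤ ‖qp q n‖ ∧ ‖qp q n‖ ≤ C := by
  set r := ‖q‖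
  have hr : 0 ≤ r := norm_nonneg q
  have hr1 (j : ℕ) : r ^ (j + 1) ≤ 1 := pow_le_one₀ hr hq.le
  have hs : Summable fun j : ℕ => r ^ (j + 1) :=
    (summable_nat_add_iff 1).2 (summable_geometric_of_lt_one hr hq)
  have hlo : Multipliable fun j : ℕ => 1 - r ^ (j + 1) := by
    simpa [sub_eq_add_neg] using Real.multipliable_one_add_of_summable hs.neg
  refine ⟨∏' j : ℕ, (1 - r ^ (j + 1)), ∏' j : ℕ, (1 + r ^ (j + 1)), ?_, fun n => ⟨?_, ?_⟩⟩
  · have hne (j : ℕ) : 1 + -r ^ (j + 1) ≠ 0 := by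
      have : r ^ (j + 1) < 1 := pow_lt_one₀ hr hq (by omega)
      exact (by linarith : (0 : ℝ) < 1 + -r ^ (j + 1)).ne'
    refine (tprod_nonneg fun j => sub_nonneg.2 (hr1 j)).lt_of_ne' ?_
    simpa [sub_eq_add_neg] using tprod_one_add_ne_zero_of_summable hne
      (by simpa [abs_of_nonneg hr] using hs)
  · calc ∏' j : ℕ, (1 - r ^ (j + 1)) ≤ ∏ j ∈ range n, (1 - r ^ (j + 1)) :=
          tprod_le_prod_range_of_le_one hlo (fun j => sub_nonneg.2 (hr1 j))
            (fun j => sub_le_self _ (by positivity)) n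
      _ ≤ ∏ j ∈ range n, ‖1 - q ^ (j + 1)‖ := by
          refine prod_le_prod (fun j _ => sub_nonneg.2 (hr1 j)) fun j _ => ?_
          simpa [r] using norm_sub_norm_le (1 : ℂ) (q ^ (j + 1))
      _ = ‖qp q n‖ := (norm_prod _ _).symm
  · calc ‖qp q n‖ ≤ ∏ j ∈ range n, ‖1 - q ^ (j + 1)‖ := norm_prod_le _ _
      _ ≤ ∏ j ∈ range n, (1 + r ^ (j + 1)) :=
          prod_le_prod (fun j _ => norm_nonneg _) fun j _ => by
            simpa [r] using norm_sub_le (1 : ℂ) (q ^ (j + 1))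
      _ ≤ ∏' j : ℕ, (1 + r ^ (j + 1)) :=
          prod_range_le_tprod_of_one_le (Real.multipliable_one_add_of_summable hs)
            (fun j => le_add_of_nonneg_right (by positivity)) n

/-- The Gaussian binomial coefficient `[n + k, n]_q`. -/
noncomputable def qBinom (q : ℂ) (n k : ℕ) : ℂ := qp q (n + k) / (qp q n * qp q k)

lemma qBinom_zero_left (hq : ‖q‖ < 1) (k : ℕ) : qBinom q 0 k = 1 := by
  rw [qBinom, zero_add, qp_zero, one_mul, div_self (qp_ne_zero hq k)]

lemma qBinom_zero_right (hq : ‖q‖ < 1) (n : ℕ) : qBinom q n 0 = 1 := by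
  rw [qBinom, add_zero, qp_zero, mul_one, div_self (qp_ne_zero hq n)]

lemma qBinom_succ_succ (hq : ‖q‖ < 1) (n k : ℕ) :
    qBinom q (n + 1) (k + 1) = qBinom q (n + 1) k + q ^ (k + 1) * qBinom q n (k + 1) := by
  have := qp_ne_zero hq
  have := one_sub_pow_succ_ne_zero hq n
  have := one_sub_pow_succ_ne_zero hq k
  simp only [qBinom, show n + 1 + (k + 1) = n + k + 1 + 1 by ring,
    show n + 1 + k = n + k + 1 by ring, show n + (k + 1) = n + k + 1 by ring, qp_succ]
  field_simp
  ring

lemma exists_norm_qBinom_mul_pow_le (hq : ‖q‖ < 1) (x : ℂ) :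
    ∃ B, ∀ n k, ‖qBinom q n k * x ^ n‖ ≤ B * ‖x‖ ^ n := by
  obtain ⟨c, C, hc, hbd⟩ := exists_norm_qp_bounds hq
  refine ⟨C / (c * c), fun n k => ?_⟩
  rw [norm_mul, norm_pow, qBinom, norm_div, norm_mul]
  refine mul_le_mul_of_nonneg_right ?_ (by positivity)
  exact div_le_div₀ ((norm_nonneg _).trans (hbd 0).2) (hbd _).2 (by positivity)
    (mul_le_mul (hbd n).1 (hbd k).1 hc.le (norm_nonneg _))

lemma tendsto_qBinom (hq : ‖q‖ < 1) (n : ℕ) :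
    Tendsto (qBinom q n) atTop (𝓝 (qp q n)⁻¹) := by
  have hlim := ((tendsto_qp hq).comp (tendsto_atTop_mono (Nat.le_add_left · n) tendsto_id)).div
    ((tendsto_qp hq).const_mul (qp q n)) (mul_ne_zero (qp_ne_zero hq n) (qpInf_ne_zero hq))
  rwa [div_mul_cancel_right₀ (qpInf_ne_zero hq)] at hlim

lemma summable_qBinom_mul_pow (hq : ‖q‖ < 1) {x : ℂ} (hx : ‖x‖ < 1) (k : ℕ) :
    Summable fun n => qBinom q n k * x ^ n := by
  obtain ⟨B, hB⟩ := exists_norm_qBinom_mul_pow_le hq x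
  exact .of_norm_bounded ((summable_geometric_of_lt_one (norm_nonneg x) hx).mul_left B) (hB · k)

theorem tsum_qBinom_mul_pow (hq : ‖q‖ < 1) {x : ℂ} (hx : ‖x‖ < 1) (k : ℕ) :
    ∑' n, qBinom q n k * x ^ n = (∏ j ∈ range (k + 1), (1 - x * q ^ j))⁻¹ := by
  induction k with
  | zero => simp [qBinom_zero_right hq, tsum_geometric_of_norm_lt_one hx]
  | succ k ih =>
    have hk := (summable_qBinom_mul_pow hq hx k).tsum_eq_zero_add
    have hk1 := (summable_qBinom_mul_pow hq hx (k + 1)).tsum_eq_zero_add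
    have hpascal (n : ℕ) : qBinom q (n + 1) (k + 1) * x ^ (n + 1) =
        qBinom q (n + 1) k * x ^ (n + 1) + x * q ^ (k + 1) * (qBinom q n (k + 1) * x ^ n) := by
      rw [qBinom_succ_succ hq]
      ring
    rw [tsum_congr hpascal, Summable.tsum_add ((summable_nat_add_iff 1).2
      (summable_qBinom_mul_pow hq hx k)) ((summable_qBinom_mul_pow hq hx (k + 1)).mul_left _),
      tsum_mul_left] at hk1
    simp only [qBinom_zero_left hq, pow_zero, mul_one] at hk hk1
    rw [prod_range_succ, mul_inv, ← ih, eq_mul_inv_iff_mul_eq₀ (one_sub_mul_pow_ne_zero hx hq.le _)]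
    linear_combination hk1 - hk

theorem tsum_pow_div_qp (hq : ‖q‖ < 1) {x : ℂ} (hx : ‖x‖ < 1) :
    ∑' n, x ^ n / qp q n = (∏' j : ℕ, (1 - x * q ^ j))⁻¹ := by
  obtain ⟨B, hB⟩ := exists_norm_qBinom_mul_pow_le hq x
  have hlim := tendsto_tsum_of_dominated_convergence (f := fun k n => qBinom q n k * x ^ n)
    ((summable_geometric_of_lt_one (norm_nonneg x) hx).mul_left B)
    (fun n => (tendsto_qBinom hq n).mul_const (x ^ n)) (.of_forall fun k n => hB n k)
  simp only [tsum_qBinom_mul_pow hq hx] at hlim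
  simp only [div_eq_inv_mul]
  refine tendsto_nhds_unique hlim ?_
  exact ((multipliable_one_sub_mul_pow hq x).hasProd.tendsto_prod_nat.comp
    (tendsto_add_atTop_nat 1)).inv₀ (tprod_one_sub_mul_pow_ne_zero hq hx)

lemma norm_pow_succ_lt_one (hq : ‖q‖ < 1) (m : ℕ) : ‖q ^ (m + 1)‖ < 1 := by
  rw [norm_pow]
  exact pow_lt_one₀ (norm_nonneg q) hq (by omega)

lemma tsum_pow_pow_div_qp (hq : ‖q‖ < 1) (m : ℕ) :
    ∑' n, (q ^ (m + 1)) ^ n / qp q n = qp q m / qpInf q := by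
  rw [tsum_pow_div_qp hq (norm_pow_succ_lt_one hq m), qpInf_eq_qp_mul_tprod hq m,
    div_mul_cancel_left₀ (qp_ne_zero hq m)]

lemma tsum_qBinom_mul_pow_pow (hq : ‖q‖ < 1) (k m : ℕ) :
    ∑' n, qBinom q n k * (q ^ (m + 1)) ^ n = qp q m / qp q (m + (k + 1)) := by
  rw [tsum_qBinom_mul_pow hq (norm_pow_succ_lt_one hq m), qp_add,
    div_mul_cancel_left₀ (qp_ne_zero hq m)]

noncomputable def shiftedC5Term (q : ℂ) : ℕ × ℕ × ℕ × ℕ × ℕ → ℂ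
  | (n₁, n₂, n₃, n₄, n₅) =>
    q ^ (n₁ * n₂ + n₁ * n₅ + n₂ * n₃ + n₃ * n₄ + n₄ * n₅ + n₁ + 2 * n₂ + n₃ + n₄ + 2 * n₅) /
      (qp q n₁ * qp q n₂ * qp q n₃ * qp q n₄ * qp q n₅)

lemma summable_shiftedC5Term (hq : ‖q‖ < 1) : Summable (shiftedC5Term q) := by
  obtain ⟨c, _, hc, hbd⟩ := exists_norm_qp_bounds hq
  set r := ‖q‖
  have hgeo := summable_geometric_of_lt_one (norm_nonneg q) hq
  have hnn : 0 ≤ fun n : ℕ => r ^ n := fun n => by positivity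
  have h5 := hgeo.mul_of_nonneg (hgeo.mul_of_nonneg (hgeo.mul_of_nonneg
    (hgeo.mul_of_nonneg hgeo hnn hnn) hnn (fun _ => by positivity)) hnn (fun _ => by positivity))
    hnn (fun _ => by positivity)
  refine .of_norm_bounded (h5.mul_left (c ^ 5)⁻¹) ?_
  rintro ⟨n₁, n₂, n₃, n₄, n₅⟩
  have hexp : n₁ + n₂ + n₃ + n₄ + n₅ ≤ n₁ * n₂ + n₁ * n₅ + n₂ * n₃ + n₃ * n₄ + n₄ * n₅ + n₁ +
      2 * n₂ + n₃ + n₄ + 2 * n₅ := by omega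
  have hden : c ^ 5 ≤ ‖qp q n₁ * qp q n₂ * qp q n₃ * qp q n₄ * qp q n₅‖ := by
    have hlo := fun n => (hbd n).1
    simp only [norm_mul, pow_succ, pow_zero, one_mul]
    gcongr <;> apply hlo
  rw [shiftedC5Term, norm_div, norm_pow]
  calc _ ≤ r ^ (n₁ + n₂ + n₃ + n₄ + n₅) / c ^ 5 :=
        div_le_div₀ (by positivity) (pow_le_pow_of_le_one (norm_nonneg q) hq.le hexp)
          (by positivity) hden
    _ = _ := by simp only [pow_add]; ring

lemma tsum_shiftedC5Term_reorder (hq : ‖q‖ < 1) (a b : ℕ) :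
    ∑' (c) (d) (e), shiftedC5Term q (e, a, d, c, b) =
      q ^ (2 * (a + b)) / (qpInf q ^ 2 * (1 - q ^ (a + b + 1))) := by
  have hfac (c d e : ℕ) : shiftedC5Term q (e, a, d, c, b) =
      (q ^ (a + b + 1)) ^ e / qp q e * ((q ^ (a + c + 1)) ^ d / qp q d *
        ((q ^ (b + 1)) ^ c / (qp q a * qp q c) * (q ^ (2 * (a + b)) / qp q b))) := by
    rw [shiftedC5Term]
    ring
  have hbin (c : ℕ) : qp q (a + c) / qpInf q * ((q ^ (b + 1)) ^ c / (qp q a * qp q c) *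
      (q ^ (2 * (a + b)) / qp q b)) =
      qBinom q c a * (q ^ (b + 1)) ^ c * (q ^ (2 * (a + b)) / (qpInf q * qp q b)) := by
    rw [qBinom, add_comm c a]
    ring
  simp only [hfac, tsum_mul_right, tsum_mul_left, tsum_pow_pow_div_qp hq, hbin,
    tsum_qBinom_mul_pow_pow hq, show b + (a + 1) = a + b + 1 by ring, qp_succ]
  have := qp_ne_zero hq (a + b)
  have := qp_ne_zero hq b
  have := qpInf_ne_zero hq
  have := one_sub_pow_succ_ne_zero hq (a + b)
  field_simp

lemma summable_pow_div_qpInf_sq (hq : ‖q‖ < 1) :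
    Summable fun p : ℕ × ℕ =>
      q ^ (2 * (p.1 + p.2)) / (qpInf q ^ 2 * (1 - q ^ (p.1 + p.2 + 1))) := by
  refine summable_nat_add_of_norm_le (g := fun m => q ^ (2 * m) / (qpInf q ^ 2 * (1 - q ^ (m + 1))))
    (K := (‖qpInf q‖ ^ 2 * (1 - ‖q‖))⁻¹) (norm_nonneg q) hq fun m => ?_
  have hden : ‖qpInf q‖ ^ 2 * (1 - ‖q‖) ≤ ‖qpInf q ^ 2 * (1 - q ^ (m + 1))‖ := by
    rw [norm_mul, norm_pow]
    gcongr
    have : ‖q‖ ^ (m + 1) ≤ ‖q‖ := pow_le_of_le_one (norm_nonneg q) hq.le (by omega)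
    have := norm_sub_norm_le (1 : ℂ) (q ^ (m + 1))
    rw [norm_one, norm_pow] at this
    linarith
  have := norm_pos_iff.2 (qpInf_ne_zero hq)
  have : 0 < 1 - ‖q‖ := by linarith
  rw [norm_div, norm_pow, ← div_eq_inv_mul]
  exact div_le_div₀ (by positivity) (pow_le_pow_of_le_one (norm_nonneg q) hq.le (by omega))
    (by positivity) hden

end

theorem C5_shifted_graph_series' (q : ℂ) (h0 : 0 < ‖q‖) (h1 : ‖q‖ < 1) :
    (∑' (n₁ : ℕ) (n₂ : ℕ) (n₃ : ℕ) (n₄ : ℕ) (n₅ : ℕ),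
      q ^ (n₁ * n₂ + n₁ * n₅ + n₂ * n₃ + n₃ * n₄ + n₄ * n₅ + n₁ + 2 * n₂ + n₃ + n₄ + 2 * n₅) /
        (qp q n₁ * qp q n₂ * qp q n₃ * qp q n₄ * qp q n₅))
      = q⁻¹ ^ 2 / (qpInf q) ^ 2 *
          ∑' n : ℕ, ((n : ℂ) + 1) * q ^ (2 * (n + 1)) / (1 - q ^ (n + 1)) := by
  have hT := summable_shiftedC5Term h1
  calc _ = ∑' p, shiftedC5Term q p := hT.tsum_prod₅.symm
    _ = ∑' p, shiftedC5Term q (c5Reorder ℕ p) := ((c5Reorder ℕ).tsum_eq _).symm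
    _ = ∑' (a) (b) (c) (d) (e), shiftedC5Term q (e, a, d, c, b) :=
        ((c5Reorder ℕ).summable_iff.2 hT).tsum_prod₅
    _ = ∑' (a) (b), q ^ (2 * (a + b)) / (qpInf q ^ 2 * (1 - q ^ (a + b + 1))) := by
        simp_rw [tsum_shiftedC5Term_reorder h1]
    _ = ∑' m : ℕ, (m + 1) • (q ^ (2 * m) / (qpInf q ^ 2 * (1 - q ^ (m + 1)))) :=
        tsum_tsum_nat_add (g := fun m => q ^ (2 * m) / (qpInf q ^ 2 * (1 - q ^ (m + 1))))
          (summable_pow_div_qpInf_sq h1)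
    _ = _ := by
        rw [← tsum_mul_left]
        refine tsum_congr fun m => ?_
        have := qpInf_ne_zero h1
        have := one_sub_pow_succ_ne_zero h1 m
        have : q ≠ 0 := norm_pos_iff.1 h0
        rw [nsmul_eq_mul]
        push_cast
        field_simp
        ring
end

section
/- For every complex number q with 0 < |q| < 1, the triple Lambert-type sum for the sum of squares of divisors satisfies Σ_{n₁,n₂,n₃ ≥ 0} q^{n₁+n₂+n₃+1} / ( (1 - q^{n₁+n₂+1})(1 - q^{n₁+n₂+n₃+1}) ) = Σ_{n≥1} n²·q^n/(1 - q^n). -/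
/-!
Write `g n = q^(n+1) / (1 - q^(n+1))` and `t m = ∑_{k ≥ 0} g (k + m)`. Since
`1 / (1 - q^(m+1)) = 1 + g m`, summing over `n₃` and then over `n₁ + n₂ = m` turns the triple
series into `∑_m (m+1) t m + ∑_m (m+1) g m t m`. Collecting the coefficient of each `g n`, the
first sum is `∑_n (1 + ⋯ + (n+1)) g n`. For the second, `g a g b = g (a+b+1) (g a + g b + 1)`
(which is `q^(a+1) q^(b+1) = q^(a+b+2)` in disguise) evaluates the antidiagonal sums of the Cauchy
product `(∑_a (a+1) g a)(∑_b g b)`, while its row sums, split at `b = a`, are the same series plus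
`∑_a (a+1) g a t a`; comparing the two gives `∑_n (1 + ⋯ + n) g n`. Finally
`(1 + ⋯ + (n+1)) + (1 + ⋯ + n) = (n+1)^2`.
-/

open Finset

theorem hasSum_sum_range_of_summable_prod {E : Type*} [NormedAddCommGroup E] [CompleteSpace E]
    {F : ℕ → ℕ → E} (h : Summable fun x : ℕ × ℕ => F x.1 (x.1 + x.2)) :
    HasSum (fun n => ∑ i ∈ range (n + 1), F i n) (∑' a, ∑' b, F a (a + b)) := by
  let e := HasAntidiagonal.sigmaAntidiagonalEquivProd (A := ℕ)
  have he : HasSum (fun c => F (e c).1 ((e c).1 + (e c).2)) (∑' x : ℕ × ℕ, F x.1 (x.1 + x.2)) :=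
    e.hasSum_iff.mpr h.hasSum
  rw [← h.tsum_prod' h.prod_factor]
  refine he.sigma fun n => ?_
  convert hasSum_fintype _ using 1
  calc ∑ i ∈ range (n + 1), F i n = ∑ x ∈ antidiagonal n, F x.1 n :=
        (Nat.sum_antidiagonal_eq_sum_range_succ (fun i _ => F i n) n).symm
    _ = ∑ x ∈ antidiagonal n, F x.1 (x.1 + x.2) :=
        sum_congr rfl fun x hx => by rw [mem_antidiagonal.mp hx]
    _ = _ := (sum_coe_sort _ fun x : ℕ × ℕ => F x.1 (x.1 + x.2)).symm

theorem summable_add_one_mul_geometric {r : ℝ} (hr₀ : 0 ≤ r) (hr : r < 1) :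
    Summable fun n : ℕ => ((n : ℝ) + 1) * r ^ n := by
  have hmul := summable_pow_mul_geometric_of_norm_lt_one 1 (r := r)
    (by rwa [Real.norm_of_nonneg hr₀])
  exact (hmul.add (summable_geometric_of_lt_one hr₀ hr)).congr fun n => by ring

theorem norm_natCast_add_one {𝕜 : Type*} [RCLike 𝕜] (n : ℕ) : ‖(n : 𝕜) + 1‖ = n + 1 := by
  exact_mod_cast RCLike.norm_natCast (K := 𝕜) (n + 1)

theorem sum_range_add_one_add_sum_range_add_one (n : ℕ) :
    ∑ i ∈ range (n + 1), ((i : ℂ) + 1) + ∑ i ∈ range n, ((i : ℂ) + 1) = ((n : ℂ) + 1) ^ 2 := by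
  induction n with
  | zero => simp
  | succ n ih =>
    simp only [sum_range_succ] at ih ⊢
    push_cast
    linear_combination ih

noncomputable def lambertTerm (q : ℂ) (n : ℕ) : ℂ := q ^ (n + 1) / (1 - q ^ (n + 1))

noncomputable def lambertTail (q : ℂ) (m : ℕ) : ℂ := ∑' k, lambertTerm q (k + m)

section Lambert

variable {q : ℂ}

theorem one_sub_pow_ne_zero_of_norm_lt_one (hq : ‖q‖ < 1) {n : ℕ} (hn : n ≠ 0) :
    1 - q ^ n ≠ 0 := by
  rw [sub_ne_zero, ne_comm]
  refine ne_of_apply_ne norm (ne_of_lt ?_)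
  simpa [norm_pow] using pow_lt_one₀ (norm_nonneg q) hq hn

theorem norm_inv_one_sub_pow_le (hq : ‖q‖ < 1) (n : ℕ) :
    ‖(1 - q ^ n)⁻¹‖ ≤ (1 - ‖q‖)⁻¹ := by
  have hpos : 0 < 1 - ‖q‖ := sub_pos.mpr hq
  rcases eq_or_ne n 0 with rfl | hn
  · simpa using hpos.le
  have hle : 1 - ‖q‖ ≤ ‖1 - q ^ n‖ :=
    calc 1 - ‖q‖ ≤ 1 - ‖q‖ ^ n := by
          gcongr; exact pow_le_of_le_one (norm_nonneg q) hq.le hn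
      _ ≤ ‖1 - q ^ n‖ := by simpa [norm_pow] using norm_sub_norm_le (1 : ℂ) (q ^ n)
  rw [norm_inv]
  exact inv_anti₀ hpos hle

theorem inv_one_sub_pow_succ (hq : ‖q‖ < 1) (n : ℕ) :
    (1 - q ^ (n + 1))⁻¹ = 1 + lambertTerm q n := by
  have h := one_sub_pow_ne_zero_of_norm_lt_one hq n.succ_ne_zero
  rw [lambertTerm]
  field_simp
  ring

theorem lambertTerm_mul_lambertTerm (hq : ‖q‖ < 1) (a b : ℕ) :
    lambertTerm q a * lambertTerm q b
      = lambertTerm q (a + b + 1) * (lambertTerm q a + lambertTerm q b + 1) := by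
  have ha := one_sub_pow_ne_zero_of_norm_lt_one hq a.succ_ne_zero
  have hb := one_sub_pow_ne_zero_of_norm_lt_one hq b.succ_ne_zero
  have hab := one_sub_pow_ne_zero_of_norm_lt_one hq (a + b + 1).succ_ne_zero
  have hpow : q ^ (a + b + 1 + 1) = q ^ (a + 1) * q ^ (b + 1) := by rw [← pow_add]; ring
  simp only [lambertTerm, hpow] at hab ⊢
  field_simp
  ring

theorem norm_lambertTerm_le (hq : ‖q‖ < 1) (n : ℕ) :
    ‖lambertTerm q n‖ ≤ (1 - ‖q‖)⁻¹ * ‖q‖ ^ n := by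
  rw [lambertTerm, div_eq_mul_inv, norm_mul, norm_pow, mul_comm]
  exact mul_le_mul (norm_inv_one_sub_pow_le hq _)
    (pow_le_pow_of_le_one (norm_nonneg q) hq.le n.le_succ) (by positivity)
    (inv_nonneg.mpr (sub_pos.mpr hq).le)

theorem summable_norm_lambertTerm (hq : ‖q‖ < 1) : Summable fun n => ‖lambertTerm q n‖ :=
  .of_nonneg_of_le (fun _ => norm_nonneg _) (norm_lambertTerm_le hq)
    ((summable_geometric_of_lt_one (norm_nonneg q) hq).mul_left _)

theorem norm_lambertTail_le (hq : ‖q‖ < 1) (m : ℕ) :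
    ‖lambertTail q m‖ ≤ (1 - ‖q‖)⁻¹ ^ 2 * ‖q‖ ^ m := by
  have hgeom := (hasSum_geometric_of_lt_one (norm_nonneg q) hq).mul_left ((1 - ‖q‖)⁻¹ * ‖q‖ ^ m)
  calc ‖lambertTail q m‖ ≤ (1 - ‖q‖)⁻¹ * ‖q‖ ^ m * (1 - ‖q‖)⁻¹ :=
        tsum_of_norm_bounded hgeom fun k => (norm_lambertTerm_le hq _).trans_eq (by ring)
    _ = (1 - ‖q‖)⁻¹ ^ 2 * ‖q‖ ^ m := by ring

theorem summable_norm_add_one_mul_lambertTerm (hq : ‖q‖ < 1) :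
    Summable fun n : ℕ => ‖((n : ℂ) + 1) * lambertTerm q n‖ := by
  refine .of_nonneg_of_le (fun _ => norm_nonneg _) (fun n => ?_)
    ((summable_add_one_mul_geometric (norm_nonneg q) hq).mul_left (1 - ‖q‖)⁻¹)
  rw [norm_mul, norm_natCast_add_one]
  calc ((n : ℝ) + 1) * ‖lambertTerm q n‖ ≤ ((n : ℝ) + 1) * ((1 - ‖q‖)⁻¹ * ‖q‖ ^ n) := by
        gcongr; exact norm_lambertTerm_le hq n
    _ = (1 - ‖q‖)⁻¹ * (((n : ℝ) + 1) * ‖q‖ ^ n) := by ring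

theorem summable_mul_lambertTerm_mul_lambertTail (hq : ‖q‖ < 1) :
    Summable fun n : ℕ => ((n : ℂ) + 1) * lambertTerm q n * lambertTail q n := by
  refine .of_norm_bounded ((summable_norm_add_one_mul_lambertTerm hq).mul_right
    ((1 - ‖q‖)⁻¹ ^ 2)) fun n => ?_
  rw [norm_mul]
  gcongr
  calc ‖lambertTail q n‖ ≤ (1 - ‖q‖)⁻¹ ^ 2 * ‖q‖ ^ n := norm_lambertTail_le hq n
    _ ≤ (1 - ‖q‖)⁻¹ ^ 2 * 1 := by gcongr; exact pow_le_one₀ (norm_nonneg q) hq.le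
    _ = (1 - ‖q‖)⁻¹ ^ 2 := mul_one _

theorem sum_antidiagonal_mul_lambertTerm (hq : ‖q‖ < 1) (m : ℕ) :
    ∑ x ∈ antidiagonal m, ((x.1 : ℂ) + 1) * lambertTerm q x.1 * lambertTerm q x.2
      = (((m + 1 : ℕ) : ℂ) + 1) * lambertTerm q (m + 1) * ∑ i ∈ range (m + 1), lambertTerm q i
        + (∑ i ∈ range (m + 1), ((i : ℂ) + 1)) * lambertTerm q (m + 1) := by
  set g := lambertTerm q
  have hterm : ∀ x ∈ antidiagonal m, ((x.1 : ℂ) + 1) * g x.1 * g x.2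
      = g (m + 1) * (((x.1 : ℂ) + 1) * g x.1 + ((x.1 : ℂ) + 1) * g x.2 + ((x.1 : ℂ) + 1)) := by
    intro x hx
    rw [mul_assoc, lambertTerm_mul_lambertTerm hq, mem_antidiagonal.mp hx]
    ring
  have hswap : ∑ x ∈ antidiagonal m, ((x.1 : ℂ) + 1) * g x.2
      = ∑ x ∈ antidiagonal m, ((x.2 : ℂ) + 1) * g x.1 :=
    Nat.sum_antidiagonal_swap (f := fun x => ((x.2 : ℂ) + 1) * g x.1)
  have hweight : ∑ x ∈ antidiagonal m, (((x.1 : ℂ) + 1) * g x.1 + ((x.2 : ℂ) + 1) * g x.1)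
      = (((m + 1 : ℕ) : ℂ) + 1) * ∑ i ∈ range (m + 1), g i := by
    rw [mul_sum, ← Nat.sum_antidiagonal_eq_sum_range_succ (fun i _ => _ * g i)]
    refine sum_congr rfl fun x hx => ?_
    have hsum : (x.1 : ℂ) + x.2 = m := by exact_mod_cast mem_antidiagonal.mp hx
    push_cast
    linear_combination g x.1 * hsum
  rw [sum_congr rfl hterm, ← mul_sum, sum_add_distrib, sum_add_distrib, hswap,
    ← sum_add_distrib, hweight,
    Nat.sum_antidiagonal_eq_sum_range_succ (fun i _ => (i : ℂ) + 1)]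
  ring

theorem hasSum_sum_range_mul_lambertTerm (hq : ‖q‖ < 1) :
    HasSum (fun n => (∑ i ∈ range n, ((i : ℂ) + 1)) * lambertTerm q n)
      (∑' a : ℕ, ((a : ℂ) + 1) * lambertTerm q a * lambertTail q a) := by
  set g := lambertTerm q
  set f := fun a : ℕ => ((a : ℂ) + 1) * g a
  let X := fun a : ℕ => f a * ∑ i ∈ range a, g i
  have hf : Summable fun a => ‖f a‖ := summable_norm_add_one_mul_lambertTerm hq
  have hg : Summable fun n => ‖g n‖ := summable_norm_lambertTerm hq
  have hX : Summable X := by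
    refine .of_norm_bounded (hf.mul_right (∑' n, ‖g n‖)) fun a => ?_
    rw [norm_mul]
    gcongr
    exact (norm_sum_le _ _).trans (hg.sum_le_tsum _ fun _ _ => norm_nonneg _)
  have hrows : (∑' a, f a) * ∑' n, g n
      = ∑' a, X a + ∑' a : ℕ, ((a : ℂ) + 1) * g a * lambertTail q a := by
    rw [← tsum_mul_right, ← hX.tsum_add (summable_mul_lambertTerm_mul_lambertTail hq)]
    refine tsum_congr fun a => ?_
    rw [← hg.of_norm.sum_add_tsum_nat_add a]
    simp only [X, f, lambertTail, g]
    ring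
  have hcauchy : HasSum (fun m => X (m + 1) + (∑ i ∈ range (m + 1), ((i : ℂ) + 1)) * g (m + 1))
      ((∑' a, f a) * ∑' n, g n) := by
    rw [tsum_mul_tsum_eq_tsum_sum_antidiagonal_of_summable_norm hf hg]
    exact (summable_norm_sum_mul_antidiagonal_of_summable_norm hf hg).of_norm.hasSum.congr_fun
      fun m => (sum_antidiagonal_mul_lambertTerm hq m).symm
  have hshift : HasSum (fun n => X n + (∑ i ∈ range n, ((i : ℂ) + 1)) * g n)
      ((∑' a, f a) * ∑' n, g n) := by
    simpa [X] using HasSum.zero_add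
      (f := fun n => X n + (∑ i ∈ range n, ((i : ℂ) + 1)) * g n) hcauchy
  rw [hrows] at hshift
  simpa using hshift.sub hX.hasSum

theorem summable_add_one_mul_lambertTail (hq : ‖q‖ < 1) :
    Summable fun n : ℕ => ((n : ℂ) + 1) * lambertTail q n := by
  refine .of_norm_bounded ((summable_add_one_mul_geometric (norm_nonneg q) hq).mul_left
    ((1 - ‖q‖)⁻¹ ^ 2)) fun n => ?_
  rw [norm_mul, norm_natCast_add_one]
  calc ((n : ℝ) + 1) * ‖lambertTail q n‖ ≤ ((n : ℝ) + 1) * ((1 - ‖q‖)⁻¹ ^ 2 * ‖q‖ ^ n) := by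
        gcongr; exact norm_lambertTail_le hq n
    _ = (1 - ‖q‖)⁻¹ ^ 2 * (((n : ℝ) + 1) * ‖q‖ ^ n) := by ring

theorem hasSum_sum_range_succ_mul_lambertTerm (hq : ‖q‖ < 1) :
    HasSum (fun n => (∑ i ∈ range (n + 1), ((i : ℂ) + 1)) * lambertTerm q n)
      (∑' a : ℕ, ((a : ℂ) + 1) * lambertTail q a) := by
  have hprod : Summable fun x : ℕ × ℕ => ((x.1 : ℂ) + 1) * lambertTerm q (x.1 + x.2) := by
    refine .of_norm_bounded (((summable_add_one_mul_geometric (norm_nonneg q) hq).mul_left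
      (1 - ‖q‖)⁻¹).mul_of_nonneg (summable_geometric_of_lt_one (norm_nonneg q) hq)
      (fun _ => by positivity) (fun _ => by positivity)) fun x => ?_
    rw [norm_mul, norm_natCast_add_one]
    calc ((x.1 : ℝ) + 1) * ‖lambertTerm q (x.1 + x.2)‖
        ≤ ((x.1 : ℝ) + 1) * ((1 - ‖q‖)⁻¹ * ‖q‖ ^ (x.1 + x.2)) := by
          gcongr; exact norm_lambertTerm_le hq _
      _ = (1 - ‖q‖)⁻¹ * (((x.1 : ℝ) + 1) * ‖q‖ ^ x.1) * ‖q‖ ^ x.2 := by ring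
  have hrows : ∑' (a : ℕ) (b : ℕ), ((a : ℂ) + 1) * lambertTerm q (a + b)
      = ∑' a : ℕ, ((a : ℂ) + 1) * lambertTail q a := by
    refine tsum_congr fun a => ?_
    rw [lambertTail, ← tsum_mul_left]
    exact tsum_congr fun b => by rw [add_comm b]
  rw [← hrows]
  exact (hasSum_sum_range_of_summable_prod (F := fun a n => ((a : ℂ) + 1) * lambertTerm q n)
    hprod).congr_fun fun n => sum_mul _ _ _

theorem tsum_triple_eq_tsum_mul_lambertTail (hq : ‖q‖ < 1) :
    (∑' (n₁ : ℕ) (n₂ : ℕ) (n₃ : ℕ),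
      q ^ (n₁ + n₂ + n₃ + 1) / ((1 - q ^ (n₁ + n₂ + 1)) * (1 - q ^ (n₁ + n₂ + n₃ + 1))))
      = ∑' n : ℕ, ((n : ℂ) + 1) * ((1 - q ^ (n + 1))⁻¹ * lambertTail q n) := by
  have hterm : ∀ a b c : ℕ,
      q ^ (a + b + c + 1) / ((1 - q ^ (a + b + 1)) * (1 - q ^ (a + b + c + 1)))
        = (1 - q ^ (a + b + 1))⁻¹ * lambertTerm q (c + (a + b)) := by
    intro a b c
    rw [lambertTerm, show c + (a + b) + 1 = a + b + c + 1 by ring, div_mul_eq_div_div_swap,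
      div_eq_inv_mul]
  have hprod : Summable fun x : ℕ × ℕ =>
      (1 - q ^ (x.1 + x.2 + 1))⁻¹ * lambertTail q (x.1 + x.2) := by
    refine .of_norm_bounded (((summable_geometric_of_lt_one (norm_nonneg q) hq).mul_left
      ((1 - ‖q‖)⁻¹ ^ 3)).mul_of_nonneg (summable_geometric_of_lt_one (norm_nonneg q) hq)
      (fun _ => by positivity) (fun _ => by positivity)) fun x => ?_
    rw [norm_mul]
    calc ‖(1 - q ^ (x.1 + x.2 + 1))⁻¹‖ * ‖lambertTail q (x.1 + x.2)‖
        ≤ (1 - ‖q‖)⁻¹ * ((1 - ‖q‖)⁻¹ ^ 2 * ‖q‖ ^ (x.1 + x.2)) :=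
          mul_le_mul (norm_inv_one_sub_pow_le hq _) (norm_lambertTail_le hq _) (norm_nonneg _)
            (by positivity)
      _ = (1 - ‖q‖)⁻¹ ^ 3 * ‖q‖ ^ x.1 * ‖q‖ ^ x.2 := by ring
  calc _ = ∑' (a : ℕ) (b : ℕ), (1 - q ^ (a + b + 1))⁻¹ * lambertTail q (a + b) := by
        simp_rw [hterm, tsum_mul_left]; rfl
    _ = _ := (hasSum_sum_range_of_summable_prod
          (F := fun _ n => (1 - q ^ (n + 1))⁻¹ * lambertTail q n) hprod).tsum_eq.symm
    _ = _ := by simp [sum_const]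

theorem tsum_add_one_mul_inv_mul_lambertTail (hq : ‖q‖ < 1) :
    ∑' n : ℕ, ((n : ℂ) + 1) * ((1 - q ^ (n + 1))⁻¹ * lambertTail q n)
      = ∑' n : ℕ, ((n : ℂ) + 1) ^ 2 * lambertTerm q n := by
  have hsplit : ∀ n : ℕ, ((n : ℂ) + 1) * ((1 - q ^ (n + 1))⁻¹ * lambertTail q n)
      = ((n : ℂ) + 1) * lambertTail q n
        + ((n : ℂ) + 1) * lambertTerm q n * lambertTail q n := by
    intro n; rw [inv_one_sub_pow_succ hq]; ring
  rw [tsum_congr hsplit, (summable_add_one_mul_lambertTail hq).tsum_add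
      (summable_mul_lambertTerm_mul_lambertTail hq),
    ← ((hasSum_sum_range_succ_mul_lambertTerm hq).add
      (hasSum_sum_range_mul_lambertTerm hq)).tsum_eq]
  exact tsum_congr fun n => by rw [← add_mul, sum_range_add_one_add_sum_range_add_one]

end Lambert

theorem sum_of_squares_of_divisors_triple_sum_general (q : ℂ)
    (h1 : ‖q‖ < 1) :
    (∑' (n₁ : ℕ) (n₂ : ℕ) (n₃ : ℕ),
      q ^ (n₁ + n₂ + n₃ + 1) /
        ((1 - q ^ (n₁ + n₂ + 1)) * (1 - q ^ (n₁ + n₂ + n₃ + 1))))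
      = ∑' n : ℕ, ((n : ℂ) + 1) ^ 2 * q ^ (n + 1) / (1 - q ^ (n + 1)) := by
  rw [tsum_triple_eq_tsum_mul_lambertTail h1, tsum_add_one_mul_inv_mul_lambertTail h1]
  exact tsum_congr fun n => by rw [lambertTerm, mul_div_assoc]

theorem sum_of_squares_of_divisors_triple_sum (q : ℂ)
    (h0 : 0 < ‖q‖) (h1 : ‖q‖ < 1) :
    (∑' (n₁ : ℕ) (n₂ : ℕ) (n₃ : ℕ),
      q ^ (n₁ + n₂ + n₃ + 1) /
        ((1 - q ^ (n₁ + n₂ + 1)) * (1 - q ^ (n₁ + n₂ + n₃ + 1))))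
      = ∑' n : ℕ, ((n : ℂ) + 1) ^ 2 * q ^ (n + 1) / (1 - q ^ (n + 1)) :=
  sum_of_squares_of_divisors_triple_sum_general q h1
end

section
/- For every complex number q with 0 < |q| < 1, one has Σ_{n≥1} σ₁(n)·q^n = Σ_{n≥1} q^n/(1 - q^n)² = Σ_{n≥1} (-1)^{n+1}·(1 + q^n)·q^{n(n+1)/2}/(1 - q^n)², where σ₁(n) denotes the sum of the positive divisors of n. Equivalently, with E₂(q) := 1 - 24·Σ_{n≥1} σ₁(n)·q^n, both Lambert-type series above equal (1 - E₂(q))/24. -/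
/-!
Expanding `qᵐ/(1 - qᵐ)² = Σ_{c ≥ 1} c q^{mc}` and regrouping by `N = mc` gives `Σ σ₁(N) q^N`.

For the alternating series, `(1 + r)/(1 - r)² = Σ_k (2k + 1) rᵏ` turns the `n`-th term into
`Σ_k (-1)ⁿ (2k + 1) q^{ab/2}` with `a = n + 1`, `b = n + 2 + 2k`. The pairs `(a, b)` with
`a < b` of opposite parity correspond bijectively to pairs `(e, g)` with `e` odd, via
`{a, b} = {e, 2g}`, and in both cases the coefficient becomes `2g - e`. Regrouping by
`N = eg` leaves `Σ_{e ∣ N, e odd} (2N/e - e)`, which is `σ₁(N)`: doubling `N` doubles the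
first sum, keeps the odd divisors, and adds the odd divisors of `N` to `σ₁`.
-/

open ArithmeticFunction
open scoped ArithmeticFunction.sigma

theorem HasSum.sum_divisorsAntidiagonal {α : Type*} [AddCommMonoid α] [TopologicalSpace α]
    [ContinuousAdd α] [RegularSpace α] {f : ℕ → ℕ → α} {s : α}
    (h : HasSum (fun p : ℕ+ × ℕ+ => f p.1 p.2) s) :
    HasSum (fun n : ℕ+ => ∑ x ∈ (n : ℕ).divisorsAntidiagonal, f x.1 x.2) s := by
  refine ((sigmaAntidiagonalEquivProd.hasSum_iff (f := fun p => f p.1 p.2)).mpr h).sigma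
    fun n => ?_
  convert hasSum_fintype _ using 1
  exact ((n : ℕ).divisorsAntidiagonal.sum_coe_sort _).symm

namespace Nat

theorem filter_odd_divisors_two_mul (n : ℕ) :
    {e ∈ (2 * n).divisors | Odd e} = {e ∈ n.divisors | Odd e} := by
  ext e
  simp only [Finset.mem_filter, Nat.mem_divisors]
  constructor
  · rintro ⟨⟨hd, hn⟩, ho⟩
    exact ⟨⟨(Nat.coprime_two_right.mpr ho).dvd_of_dvd_mul_left hd, by omega⟩, ho⟩
  · rintro ⟨⟨hd, hn⟩, ho⟩
    exact ⟨⟨hd.mul_left 2, by omega⟩, ho⟩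

theorem sum_divisors_two_mul (n : ℕ) :
    ∑ d ∈ (2 * n).divisors, d = 2 * ∑ d ∈ n.divisors, d + ∑ e ∈ n.divisors with Odd e, e := by
  have heven : {d ∈ (2 * n).divisors | ¬ Odd d}
      = n.divisors.map ⟨(2 * ·), mul_right_injective₀ two_ne_zero⟩ := by
    ext d
    simp only [Finset.mem_filter, Nat.mem_divisors, Finset.mem_map,
      Function.Embedding.coeFn_mk, Nat.not_odd_iff_even, even_iff_two_dvd]
    constructor
    · rintro ⟨⟨hd, hn⟩, c, rfl⟩
      exact ⟨c, ⟨Nat.dvd_of_mul_dvd_mul_left two_pos hd, by omega⟩, rfl⟩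
    · rintro ⟨c, ⟨hd, hn⟩, rfl⟩
      exact ⟨⟨mul_dvd_mul_left 2 hd, by omega⟩, dvd_mul_right 2 c⟩
  rw [← Finset.sum_filter_not_add_sum_filter _ Odd, heven, filter_odd_divisors_two_mul,
    Finset.sum_map, Finset.mul_sum]
  rfl

theorem two_mul_sum_div_odd_divisors (n : ℕ) :
    2 * ∑ e ∈ n.divisors with Odd e, n / e
      = ∑ d ∈ n.divisors, d + ∑ e ∈ n.divisors with Odd e, e := by
  induction n using Nat.evenOddRec with
  | h0 => simp
  | h_even n ih =>
    have hdiv : ∑ e ∈ n.divisors with Odd e, 2 * n / e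
        = 2 * ∑ e ∈ n.divisors with Odd e, n / e := by
      rw [Finset.mul_sum]
      exact Finset.sum_congr rfl fun e he =>
        Nat.mul_div_assoc 2 (Nat.dvd_of_mem_divisors (Finset.mem_filter.mp he).1)
    rw [filter_odd_divisors_two_mul, sum_divisors_two_mul, hdiv]
    omega
  | h_odd n _ =>
    have hodd : {e ∈ (2 * n + 1).divisors | Odd e} = (2 * n + 1).divisors :=
      Finset.filter_true_of_mem fun e he => (Nat.odd_mul.mp
        ((Nat.div_mul_cancel (Nat.dvd_of_mem_divisors he)).symm ▸ odd_two_mul_add_one n)).2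
    rw [hodd, Nat.sum_div_divisors (2 * n + 1) fun d => d]
    ring

end Nat

theorem tsum_pnat_coe_mul_pow_mul {K : Type*} [NormedDivisionRing K] {r : K} (hr : ‖r‖ < 1)
    (d : ℕ+) : ∑' c : ℕ+, (c : K) * r ^ (d * c : ℕ) = r ^ (d : ℕ) / (1 - r ^ (d : ℕ)) ^ 2 := by
  have hrd : ‖r ^ (d : ℕ)‖ < 1 := by
    rw [norm_pow]; exact pow_lt_one₀ (norm_nonneg r) hr d.ne_zero
  rw [← tsum_coe_mul_geometric_of_norm_lt_one hrd,
    ← tsum_zero_pnat_eq_tsum_nat (hasSum_coe_mul_geometric_of_norm_lt_one hrd).summable]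
  simp [pow_mul]

theorem tsum_pow_div_one_sub_sq_eq_tsum_sigma {𝕜 : Type*} [NontriviallyNormedField 𝕜]
    [CompleteSpace 𝕜] [NormSMulClass ℤ 𝕜] {r : 𝕜} (hr : ‖r‖ < 1) :
    ∑' n : ℕ+, r ^ (n : ℕ) / (1 - r ^ (n : ℕ)) ^ 2 = ∑' n : ℕ+, σ 1 n * r ^ (n : ℕ) := by
  rw [← tsum_prod_pow_eq_tsum_sigma 1 hr]
  simp only [pow_one, tsum_pnat_coe_mul_pow_mul hr]

theorem hasSum_two_mul_add_one_mul_geometric {K : Type*} [NormedField K] {r : K}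
    (hr : ‖r‖ < 1) : HasSum (fun k : ℕ => (2 * k + 1) * r ^ k) ((1 + r) / (1 - r) ^ 2) := by
  have hr1 : 1 - r ≠ 0 := sub_ne_zero.mpr fun h => by simp [← h] at hr
  have h := ((hasSum_coe_mul_geometric_of_norm_lt_one hr).mul_left 2).add
    (hasSum_geometric_of_norm_lt_one hr)
  rw [show 2 * (r / (1 - r) ^ 2) + (1 - r)⁻¹ = (1 + r) / (1 - r) ^ 2 by field_simp; ring] at h
  exact h.congr_fun fun k => by ring

theorem hasSum_alternatingLambert_row {K : Type*} [NormedField K] {q : K} (hq : ‖q‖ < 1)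
    (n : ℕ) :
    HasSum (fun k : ℕ => (-1) ^ n * (2 * k + 1) * q ^ ((n + 1) * (n + 2) / 2 + k * (n + 1)))
      ((-1) ^ n * (1 + q ^ (n + 1)) * q ^ ((n + 1) * (n + 2) / 2) / (1 - q ^ (n + 1)) ^ 2) := by
  have hqn : ‖q ^ (n + 1)‖ < 1 := by
    rw [norm_pow]; exact pow_lt_one₀ (norm_nonneg q) hq n.succ_ne_zero
  have h := (hasSum_two_mul_add_one_mul_geometric hqn).mul_left
    ((-1) ^ n * q ^ ((n + 1) * (n + 2) / 2))
  rw [← mul_div_assoc, mul_right_comm _ _ (1 + _)] at h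
  exact h.congr_fun fun k => by rw [pow_add, mul_comm k, pow_mul]; ring

/-- The index `(n, k)` of `(-1)ⁿ (2k + 1) q^{(n+1)(n+2+2k)/2}` is sent to the pair `(e, g)` with
`e` odd and `{n + 1, n + 2 + 2k} = {e, 2g}`. -/
def alternatingLambertIndex (p : ℕ × ℕ) : ℕ+ × ℕ+ :=
  if Even p.1 then (p.1.succPNat, (p.2 + p.1 / 2).succPNat)
  else ((p.1 + 1 + 2 * p.2).succPNat, (p.1 / 2).succPNat)

theorem alternatingLambertIndex_injective : Function.Injective alternatingLambertIndex := by
  rintro ⟨n, k⟩ ⟨n', k'⟩ h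
  simp only [alternatingLambertIndex, Nat.even_iff] at h
  split_ifs at h <;> simp only [Prod.mk.injEq, Nat.succPNat_inj] at h <;> ext <;> simp only <;>
    omega

theorem mem_range_alternatingLambertIndex {x : ℕ+ × ℕ+} (hx : Odd (x.1 : ℕ)) :
    x ∈ Set.range alternatingLambertIndex := by
  obtain ⟨⟨e, he⟩, ⟨g, hg⟩⟩ := x
  simp only [PNat.mk_coe, Nat.odd_iff] at hx
  by_cases heg : e < 2 * g
  · refine ⟨(e - 1, g - 1 - (e - 1) / 2), ?_⟩
    simp only [alternatingLambertIndex, Nat.even_iff, show (e - 1) % 2 = 0 by omega, if_true]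
    refine Prod.ext (PNat.eq ?_) (PNat.eq ?_) <;> simp <;> omega
  · refine ⟨(2 * g - 1, (e - 2 * g - 1) / 2), ?_⟩
    simp only [alternatingLambertIndex, Nat.even_iff, show ¬ (2 * g - 1) % 2 = 0 by omega,
      if_false]
    refine Prod.ext (PNat.eq ?_) (PNat.eq ?_) <;> simp <;> omega

def oddDivisorTerm {R : Type*} [Ring R] (q : R) (e g : ℕ) : R :=
  if Odd e then (2 * g - e) * q ^ (e * g) else 0

theorem oddDivisorTerm_alternatingLambertIndex {R : Type*} [CommRing R] (q : R) (p : ℕ × ℕ) :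
    oddDivisorTerm q (alternatingLambertIndex p).1 (alternatingLambertIndex p).2
      = (-1) ^ p.1 * (2 * p.2 + 1) * q ^ ((p.1 + 1) * (p.1 + 2) / 2 + p.2 * (p.1 + 1)) := by
  obtain ⟨n, k⟩ := p
  rcases Nat.even_or_odd' n with ⟨j, rfl | rfl⟩
  · have hexp : (2 * j + 1) * (2 * j + 2) / 2 + k * (2 * j + 1) = (2 * j + 1) * (k + j + 1) := by
      rw [show (2 * j + 1) * (2 * j + 2) = 2 * ((2 * j + 1) * (j + 1)) by ring,
        Nat.mul_div_cancel_left _ two_pos]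
      ring
    rw [alternatingLambertIndex, if_pos (even_two_mul j)]
    simp only [oddDivisorTerm, Nat.succPNat_coe, Nat.succ_eq_add_one,
      Nat.mul_div_cancel_left _ two_pos, if_pos (odd_two_mul_add_one j), hexp,
      (even_two_mul j).neg_one_pow]
    push_cast
    ring
  · have hexp : (2 * j + 1 + 1) * (2 * j + 1 + 2) / 2 + k * (2 * j + 1 + 1)
        = (2 * j + 1 + 1 + 2 * k + 1) * (j + 1) := by
      rw [show (2 * j + 1 + 1) * (2 * j + 1 + 2) = 2 * ((j + 1) * (2 * j + 3)) by ring,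
        Nat.mul_div_cancel_left _ two_pos]
      ring
    have hodd : Odd (2 * j + 1 + 1 + 2 * k + 1) := ⟨j + k + 1, by ring⟩
    rw [alternatingLambertIndex, if_neg (Nat.not_even_iff_odd.mpr (odd_two_mul_add_one j))]
    simp only [oddDivisorTerm, Nat.succPNat_coe, Nat.succ_eq_add_one, if_pos hodd, hexp,
      (odd_two_mul_add_one j).neg_one_pow, show (2 * j + 1) / 2 = j by omega]
    push_cast
    ring

theorem summable_oddDivisorTerm {𝕜 : Type*} [NontriviallyNormedField 𝕜] [CompleteSpace 𝕜]
    [NormSMulClass ℤ 𝕜] {q : 𝕜} (hq : ‖q‖ < 1) :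
    Summable fun p : ℕ+ × ℕ+ => oddDivisorTerm q p.1 p.2 := by
  have hq' : ‖‖q‖‖ < 1 := by rwa [norm_norm]
  refine Summable.of_norm_bounded
    (((summable_prod_mul_pow 1 hq').mul_left 2).add (summable_prod_mul_pow 1 hq').prod_symm)
    fun p => ?_
  obtain ⟨e, g⟩ := p
  have hcoeff : ‖(2 * g - e : 𝕜)‖ ≤ 2 * (g : ℝ) + e :=
    calc ‖(2 * g - e : 𝕜)‖ ≤ ‖(g : 𝕜)‖ + ‖(g : 𝕜)‖ + ‖(e : 𝕜)‖ := by
          rw [two_mul]; exact (norm_sub_le _ _).trans (by gcongr; exact norm_add_le _ _)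
      _ = 2 * (g : ℝ) + e := by rw [norm_natCast, norm_natCast]; ring
  simp only [oddDivisorTerm, Prod.fst_swap, Prod.snd_swap, pow_one, mul_comm (g : ℕ) (e : ℕ)]
  split_ifs
  · rw [norm_mul, norm_pow]
    exact (mul_le_mul_of_nonneg_right hcoeff (by positivity)).trans_eq (by ring)
  · rw [norm_zero]; positivity

theorem sum_divisorsAntidiagonal_oddDivisorTerm {R : Type*} [CommRing R] (q : R) (N : ℕ) :
    ∑ x ∈ N.divisorsAntidiagonal, oddDivisorTerm q x.1 x.2 = σ 1 N * q ^ N := by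
  have hN := congrArg (Nat.cast : ℕ → R) (Nat.two_mul_sum_div_odd_divisors N)
  push_cast at hN
  rw [Nat.sum_divisorsAntidiagonal (oddDivisorTerm q), sigma_one_apply]
  simp only [oddDivisorTerm]
  rw [← Finset.sum_filter, Finset.sum_congr rfl fun e he => by
      rw [Nat.mul_div_cancel' (Nat.dvd_of_mem_divisors (Finset.mem_filter.mp he).1)],
    ← Finset.sum_mul, Finset.sum_sub_distrib, ← Finset.mul_sum]
  push_cast
  rw [hN]
  ring

theorem tsum_alternatingLambert_eq_tsum_sigma {𝕜 : Type*} [NontriviallyNormedField 𝕜]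
    [CompleteSpace 𝕜] [NormSMulClass ℤ 𝕜] {q : 𝕜} (hq : ‖q‖ < 1) :
    ∑' n : ℕ, (-1) ^ n * (1 + q ^ (n + 1)) * q ^ ((n + 1) * (n + 2) / 2) / (1 - q ^ (n + 1)) ^ 2
      = ∑' n : ℕ+, σ 1 n * q ^ (n : ℕ) := by
  have hF := (summable_oddDivisorTerm hq).hasSum
  have hσ : HasSum (fun n : ℕ+ => σ 1 n * q ^ (n : ℕ))
      (∑' p : ℕ+ × ℕ+, oddDivisorTerm q p.1 p.2) := by
    simpa only [sum_divisorsAntidiagonal_oddDivisorTerm] using hF.sum_divisorsAntidiagonal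
  have hzero : ∀ x ∉ Set.range alternatingLambertIndex, oddDivisorTerm q x.1 x.2 = 0 :=
    fun x hx => if_neg fun he => hx (mem_range_alternatingLambertIndex he)
  have hT := (alternatingLambertIndex_injective.hasSum_iff hzero).mpr hF
  simp only [Function.comp_def, oddDivisorTerm_alternatingLambertIndex] at hT
  rw [hσ.tsum_eq, ← hT.tsum_eq,
    hT.summable.tsum_prod' fun n => (hasSum_alternatingLambert_row hq n).summable]
  exact tsum_congr fun n => (hasSum_alternatingLambert_row hq n).tsum_eq.symm

theorem lambert_series_E2_general (q : ℂ) (h1 : ‖q‖ < 1) :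
    ((∑' n : ℕ, (∑ d ∈ (n + 1).divisors, (d : ℂ)) * q ^ (n + 1))
        = ∑' n : ℕ, q ^ (n + 1) / (1 - q ^ (n + 1)) ^ 2) ∧
    ((∑' n : ℕ, q ^ (n + 1) / (1 - q ^ (n + 1)) ^ 2)
        = ∑' n : ℕ, (-1 : ℂ) ^ n * (1 + q ^ (n + 1)) * q ^ ((n + 1) * (n + 2) / 2) /
            (1 - q ^ (n + 1)) ^ 2) ∧
    ((∑' n : ℕ, q ^ (n + 1) / (1 - q ^ (n + 1)) ^ 2)
        = (1 - (1 - 24 * ∑' n : ℕ, (∑ d ∈ (n + 1).divisors, (d : ℂ)) * q ^ (n + 1))) / 24) := by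
  have hσ : ∑' n : ℕ, (∑ d ∈ (n + 1).divisors, (d : ℂ)) * q ^ (n + 1)
      = ∑' n : ℕ+, σ 1 n * q ^ (n : ℕ) := by
    rw [tsum_pnat_eq_tsum_succ (f := fun n => (σ 1 n : ℂ) * q ^ n)]
    simp [sigma_one_apply]
  have hB : ∑' n : ℕ, q ^ (n + 1) / (1 - q ^ (n + 1)) ^ 2 = ∑' n : ℕ+, σ 1 n * q ^ (n : ℕ) := by
    rw [← tsum_pnat_eq_tsum_succ (f := fun n => q ^ n / (1 - q ^ n) ^ 2)]
    exact tsum_pow_div_one_sub_sq_eq_tsum_sigma h1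
  have hC := tsum_alternatingLambert_eq_tsum_sigma h1
  refine ⟨hσ.trans hB.symm, hB.trans hC.symm, ?_⟩
  rw [hσ, hB]
  ring

theorem lambert_series_E2 (q : ℂ) (h0 : 0 < ‖q‖) (h1 : ‖q‖ < 1) :
    ((∑' n : ℕ, (∑ d ∈ (n + 1).divisors, (d : ℂ)) * q ^ (n + 1))
        = ∑' n : ℕ, q ^ (n + 1) / (1 - q ^ (n + 1)) ^ 2) ∧
    ((∑' n : ℕ, q ^ (n + 1) / (1 - q ^ (n + 1)) ^ 2)
        = ∑' n : ℕ, (-1 : ℂ) ^ n * (1 + q ^ (n + 1)) * q ^ ((n + 1) * (n + 2) / 2) /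
            (1 - q ^ (n + 1)) ^ 2) ∧
    ((∑' n : ℕ, q ^ (n + 1) / (1 - q ^ (n + 1)) ^ 2)
        = (1 - (1 - 24 * ∑' n : ℕ, (∑ d ∈ (n + 1).divisors, (d : ℂ)) * q ^ (n + 1))) / 24) :=
  lambert_series_E2_general q h1
end

section
/- Define for 0 < q < 1 the A₇ graph series H_{A₇}(q) := Σ_{n₁,…,n₇ ≥ 0} q^{n₁n₂+n₂n₃+n₃n₄+n₄n₅+n₅n₆+n₆n₇+n₁+n₂+n₃+n₄+n₅+n₆+n₇} / ((q)_{n₁}(q)_{n₂}(q)_{n₃}(q)_{n₄}(q)_{n₅}(q)_{n₆}(q)_{n₇}). Then as t → 0⁺ one has (e^{-t}; e^{-t})_∞⁴ · H_{A₇}(e^{-t}) = 1 + O(t); that is, there exist constants C > 0 and δ > 0 such that for all real t with 0 < t < δ, |(∏_{j=1}^{∞}(1 - e^{-jt}))⁴ · H_{A₇}(e^{-t}) - 1| ≤ C·t. -/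
/-- The finite q-Pochhammer symbol `(q)_n = ∏_{j=1}^n (1 - q^j)` (real version). -/
noncomputable def qpR (q : ℝ) (n : ℕ) : ℝ := ∏ j ∈ Finset.range n, (1 - q ^ (j + 1))

/-- The infinite q-Pochhammer symbol `(q)_∞ = ∏_{j=1}^∞ (1 - q^j)` (real version). -/
noncomputable def qpInfR (q : ℝ) : ℝ := ∏' j : ℕ, (1 - q ^ (j + 1))

/-- The `A₇` graph series. -/
noncomputable def HA7 (q : ℝ) : ℝ :=
  ∑' (n₁ : ℕ) (n₂ : ℕ) (n₃ : ℕ) (n₄ : ℕ) (n₅ : ℕ) (n₆ : ℕ) (n₇ : ℕ),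
    q ^ (n₁ * n₂ + n₂ * n₃ + n₃ * n₄ + n₄ * n₅ + n₅ * n₆ + n₆ * n₇
          + n₁ + n₂ + n₃ + n₄ + n₅ + n₆ + n₇) /
      (qpR q n₁ * qpR q n₂ * qpR q n₃ * qpR q n₄ * qpR q n₅ * qpR q n₆ * qpR q n₇)

/-!
Summing out the arm `n₄ — n₅ — n₆ — n₇` of the path from its end uses Euler's identity
`∑ₙ q^{(m+1)n}/(q)_n = (q)_m/(q)_∞`: the sum over `n₇` cancels `(q)_{n₆}`, the sum
over `n₆` is then geometric and turns `(q)_{n₅}` into `(q)_{n₅+1}`, and Euler's identity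
once more sums `n₅`, leaving `((q)_{n₄} - (q)_∞)/((q)_∞² q^{n₄+1})`. The arm
`n₄ — n₃ — n₂ — n₁` gives the same factor (all terms are nonnegative, so the order of
summation is free), whence `(q)_∞⁴ H_{A₇}(q) = ∑ₙ ((q)_n - (q)_∞)² / ((q)_n q^{n+2})`.

For `q` near `1` the term `n = 0` is `(1 - (q)_∞)²/q² = 1 + O(1 - q)`, the terms `n = 1, 2`
are `O(1 - q)` since `(q)_n ≤ (q)_1 = 1 - q`, and by the telescoping sum
`∑_{n ≥ N} (q)_n q^{n+1} = (q)_N - (q)_∞` the tail `n ≥ 3` is at most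
`(q)_3/(q(1 - q)²) = O(1 - q)`.
-/

open Filter Topology

section Pochhammer

variable {q : ℝ}

lemma qpR_zero (q : ℝ) : qpR q 0 = 1 := Finset.prod_range_zero _

lemma qpR_succ (q : ℝ) (n : ℕ) : qpR q (n + 1) = qpR q n * (1 - q ^ (n + 1)) :=
  Finset.prod_range_succ _ _

lemma one_sub_pow_succ_pos (hq₀ : 0 ≤ q) (hq₁ : q < 1) (j : ℕ) : 0 < 1 - q ^ (j + 1) :=
  sub_pos.2 (pow_lt_one₀ hq₀ hq₁ j.succ_ne_zero)

lemma qpR_pos (hq₀ : 0 ≤ q) (hq₁ : q < 1) (n : ℕ) : 0 < qpR q n :=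
  Finset.prod_pos fun j _ => one_sub_pow_succ_pos hq₀ hq₁ j

lemma qpR_le_one (hq₀ : 0 ≤ q) (hq₁ : q ≤ 1) (n : ℕ) : qpR q n ≤ 1 :=
  Finset.prod_le_one (fun _ _ => sub_nonneg.2 (pow_le_one₀ hq₀ hq₁))
    fun _ _ => sub_le_self _ (pow_nonneg hq₀ _)

lemma qpR_antitone (hq₀ : 0 ≤ q) (hq₁ : q < 1) : Antitone (qpR q) :=
  antitone_nat_of_succ_le fun n => by
    rw [qpR_succ]
    exact mul_le_of_le_one_right (qpR_pos hq₀ hq₁ n).le (sub_le_self _ (pow_nonneg hq₀ _))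

lemma summable_pow_succ (hq₀ : 0 ≤ q) (hq₁ : q < 1) : Summable fun j : ℕ => q ^ (j + 1) :=
  (summable_nat_add_iff 1).mpr (summable_geometric_of_lt_one hq₀ hq₁)

lemma hasProd_qpInfR (hq₀ : 0 ≤ q) (hq₁ : q < 1) :
    HasProd (fun j : ℕ => 1 - q ^ (j + 1)) (qpInfR q) := by
  simpa [qpInfR, ← sub_eq_add_neg] using
    (Real.multipliable_one_add_of_summable (summable_pow_succ hq₀ hq₁).neg).hasProd

lemma tendsto_qpR (hq₀ : 0 ≤ q) (hq₁ : q < 1) : Tendsto (qpR q) atTop (𝓝 (qpInfR q)) :=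
  (hasProd_qpInfR hq₀ hq₁).tendsto_prod_nat

lemma qpInfR_pos (hq₀ : 0 ≤ q) (hq₁ : q < 1) : 0 < qpInfR q := by
  refine lt_of_le_of_ne
    (ge_of_tendsto' (tendsto_qpR hq₀ hq₁) fun n => (qpR_pos hq₀ hq₁ n).le) (Ne.symm ?_)
  simpa [qpInfR, sub_eq_add_neg] using tprod_one_add_ne_zero_of_summable
    (fun j => by simpa [← sub_eq_add_neg] using (one_sub_pow_succ_pos hq₀ hq₁ j).ne')
    (by simpa [abs_of_nonneg hq₀] using summable_pow_succ hq₀ hq₁)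

lemma hasSum_qpR_mul_pow (hq₀ : 0 ≤ q) (hq₁ : q < 1) (n : ℕ) :
    HasSum (fun k => qpR q (k + n) * q ^ (k + n + 1)) (qpR q n - qpInfR q) := by
  have hdiff (k : ℕ) : qpR q (k + n) * q ^ (k + n + 1) = qpR q (k + n) - qpR q (k + 1 + n) := by
    rw [show k + 1 + n = k + n + 1 by omega, qpR_succ]; ring
  rw [hasSum_iff_tendsto_nat_of_nonneg
    (fun k => mul_nonneg (qpR_pos hq₀ hq₁ _).le (pow_nonneg hq₀ _))]
  simp only [hdiff, Finset.sum_range_sub', zero_add]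
  exact tendsto_const_nhds.sub ((tendsto_qpR hq₀ hq₁).comp (tendsto_add_atTop_nat n))

lemma qpInfR_le_qpR (hq₀ : 0 ≤ q) (hq₁ : q < 1) (n : ℕ) : qpInfR q ≤ qpR q n :=
  sub_nonneg.1 <| (hasSum_qpR_mul_pow hq₀ hq₁ n).nonneg
    fun _ => mul_nonneg (qpR_pos hq₀ hq₁ _).le (pow_nonneg hq₀ _)

lemma qpR_sub_qpInfR_le (hq₀ : 0 ≤ q) (hq₁ : q < 1) (n : ℕ) :
    qpR q n - qpInfR q ≤ qpR q n * q ^ (n + 1) / (1 - q) := by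
  have hgeom := (hasSum_geometric_of_lt_one hq₀ hq₁).mul_left (qpR q n * q ^ (n + 1))
  rw [← div_eq_mul_inv] at hgeom
  refine hasSum_le (fun k => ?_) (hasSum_qpR_mul_pow hq₀ hq₁ n) hgeom
  rw [show k + n + 1 = (n + 1) + k by ring, pow_add, ← mul_assoc]
  exact mul_le_mul_of_nonneg_right
    (mul_le_mul_of_nonneg_right (qpR_antitone hq₀ hq₁ (Nat.le_add_left n k))
      (pow_nonneg hq₀ _))
    (pow_nonneg hq₀ _)

end Pochhammer

section Euler

variable {q : ℝ}

noncomputable def eulerSeries (q z : ℝ) : ℝ := ∑' n, z ^ n / qpR q n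

lemma summable_eulerSeries (hq₀ : 0 ≤ q) (hq₁ : q < 1) {z : ℝ} (hz₀ : 0 ≤ z)
    (hz₁ : z < 1) : Summable fun n => z ^ n / qpR q n :=
  ((summable_geometric_of_lt_one hz₀ hz₁).div_const (qpInfR q)).of_nonneg_of_le
    (fun n => div_nonneg (pow_nonneg hz₀ n) (qpR_pos hq₀ hq₁ n).le)
    fun n => div_le_div_of_nonneg_left (pow_nonneg hz₀ n) (qpInfR_pos hq₀ hq₁)
      (qpInfR_le_qpR hq₀ hq₁ n)

lemma one_le_eulerSeries (hq₀ : 0 ≤ q) (hq₁ : q < 1) {z : ℝ} (hz₀ : 0 ≤ z)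
    (hz₁ : z < 1) : 1 ≤ eulerSeries q z := by
  simpa [eulerSeries, qpR_zero] using (summable_eulerSeries hq₀ hq₁ hz₀ hz₁).le_tsum 0
    fun n _ => div_nonneg (pow_nonneg hz₀ n) (qpR_pos hq₀ hq₁ n).le

lemma eulerSeries_sub_eulerSeries_mul (hq₀ : 0 ≤ q) (hq₁ : q < 1) {z : ℝ} (hz₀ : 0 ≤ z)
    (hz₁ : z < 1) : eulerSeries q z - eulerSeries q (q * z) = z * eulerSeries q z := by
  have hqz₁ : q * z < 1 := mul_lt_one_of_nonneg_of_lt_one_left hq₀ hq₁ hz₁.le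
  set d : ℕ → ℝ := fun n => z ^ n / qpR q n - (q * z) ^ n / qpR q n
  have hd : HasSum d (eulerSeries q z - eulerSeries q (q * z)) :=
    (summable_eulerSeries hq₀ hq₁ hz₀ hz₁).hasSum.sub
      (summable_eulerSeries hq₀ hq₁ (mul_nonneg hq₀ hz₀) hqz₁).hasSum
  have hd_succ : (fun n => d (n + 1)) = fun n => z * (z ^ n / qpR q n) := by
    funext n
    have := (qpR_pos hq₀ hq₁ n).ne'
    have := (one_sub_pow_succ_pos hq₀ hq₁ n).ne'
    simp only [d, qpR_succ]
    field_simp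
    ring
  have hshift : HasSum (fun n => d (n + 1)) (z * eulerSeries q z) := by
    rw [hd_succ]
    exact (summable_eulerSeries hq₀ hq₁ hz₀ hz₁).hasSum.mul_left z
  refine hd.unique ((hasSum_nat_add_iff' 1).mp ?_)
  simpa [d] using hshift

lemma eulerSeries_pow_succ (hq₀ : 0 ≤ q) (hq₁ : q < 1) (m : ℕ) :
    eulerSeries q (q ^ (m + 1)) = qpR q m * eulerSeries q q := by
  induction m with
  | zero => simp [qpR_zero]
  | succ m ih =>
    have h := eulerSeries_sub_eulerSeries_mul hq₀ hq₁ (pow_nonneg hq₀ (m + 1))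
      (pow_lt_one₀ hq₀ hq₁ m.succ_ne_zero)
    rw [← pow_succ'] at h
    rw [qpR_succ, mul_right_comm, ← ih]
    linear_combination -h

lemma eulerSeries_sub_one_le (hq₀ : 0 ≤ q) (hq₁ : q < 1) {z : ℝ} (hz₀ : 0 ≤ z)
    (hz₁ : z < 1) : eulerSeries q z - 1 ≤ z / ((1 - z) * qpInfR q) := by
  have he := qpInfR_pos hq₀ hq₁
  have htail : HasSum (fun n => z ^ (n + 1) / qpR q (n + 1)) (eulerSeries q z - 1) := by
    simpa [eulerSeries, qpR_zero] using
      (hasSum_nat_add_iff' 1).mpr (summable_eulerSeries hq₀ hq₁ hz₀ hz₁).hasSum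
  have hgeom : HasSum (fun n => z / qpInfR q * z ^ n) (z / ((1 - z) * qpInfR q)) := by
    have h := (hasSum_geometric_of_lt_one hz₀ hz₁).mul_left (z / qpInfR q)
    rwa [← div_eq_mul_inv, div_div, mul_comm (qpInfR q)] at h
  refine hasSum_le (fun n => ?_) htail hgeom
  rw [pow_succ', div_mul_eq_mul_div, mul_comm z]
  exact div_le_div_of_nonneg_left (by positivity) he (qpInfR_le_qpR hq₀ hq₁ _)

lemma qpInfR_mul_eulerSeries_self (hq₀ : 0 ≤ q) (hq₁ : q < 1) :
    qpInfR q * eulerSeries q q = 1 := by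
  have he := qpInfR_pos hq₀ hq₁
  have hz₀ (m : ℕ) : 0 ≤ q ^ (m + 1) := pow_nonneg hq₀ _
  have hz₁ (m : ℕ) : q ^ (m + 1) < 1 := pow_lt_one₀ hq₀ hq₁ m.succ_ne_zero
  have hlower (m : ℕ) : 1 ≤ qpR q m * eulerSeries q q := by
    rw [← eulerSeries_pow_succ hq₀ hq₁]
    exact one_le_eulerSeries hq₀ hq₁ (hz₀ m) (hz₁ m)
  have hupper (m : ℕ) :
      qpR q m * eulerSeries q q ≤ 1 + q ^ (m + 1) / ((1 - q ^ (m + 1)) * qpInfR q) := by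
    rw [← eulerSeries_pow_succ hq₀ hq₁]
    linarith [eulerSeries_sub_one_le hq₀ hq₁ (hz₀ m) (hz₁ m)]
  have hz : Tendsto (fun m : ℕ => q ^ (m + 1)) atTop (𝓝 0) :=
    (tendsto_pow_atTop_nhds_zero_of_lt_one hq₀ hq₁).comp (tendsto_add_atTop_nat 1)
  have hlim : Tendsto (fun m : ℕ => 1 + q ^ (m + 1) / ((1 - q ^ (m + 1)) * qpInfR q)) atTop
      (𝓝 1) := by
    simpa using ((hz.div ((tendsto_const_nhds.sub hz).mul tendsto_const_nhds)
      (by simpa using he.ne')).const_add 1)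
  exact tendsto_nhds_unique ((tendsto_qpR hq₀ hq₁).mul_const _)
    (tendsto_of_tendsto_of_tendsto_of_le_of_le tendsto_const_nhds hlim hlower hupper)

lemma hasSum_pow_div_qpR (hq₀ : 0 ≤ q) (hq₁ : q < 1) (m : ℕ) :
    HasSum (fun n => (q ^ (m + 1)) ^ n / qpR q n) (qpR q m / qpInfR q) := by
  have h := (summable_eulerSeries hq₀ hq₁ (pow_nonneg hq₀ (m + 1))
    (pow_lt_one₀ hq₀ hq₁ m.succ_ne_zero)).hasSum
  rwa [← eulerSeries, eulerSeries_pow_succ hq₀ hq₁,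
    eq_inv_of_mul_eq_one_right (qpInfR_mul_eulerSeries_self hq₀ hq₁)] at h

lemma hasSum_pow_div_qpR_succ (hq₀ : 0 < q) (hq₁ : q < 1) (m : ℕ) :
    HasSum (fun n => (q ^ (m + 1)) ^ n / qpR q (n + 1))
      ((qpR q m / qpInfR q - 1) / q ^ (m + 1)) := by
  have hz : q ^ (m + 1) ≠ 0 := pow_ne_zero _ hq₀.ne'
  have h := ((hasSum_nat_add_iff' 1).mpr (hasSum_pow_div_qpR hq₀.le hq₁ m)).div_const
    (q ^ (m + 1))
  simp only [Finset.sum_range_one, pow_zero, qpR_zero, div_one] at h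
  refine h.congr_fun fun n => ?_
  field_simp
  ring

end Euler

section Fubini

variable {α β γ δ : Type*}

lemma hasSum_prod_of_nonneg {f : β × γ → ℝ} (hf : 0 ≤ f) {g : β → ℝ} {s : ℝ}
    (hfg : ∀ b, HasSum (fun c => f (b, c)) (g b)) (hg : HasSum g s) : HasSum f s := by
  have hf_summable : Summable f := (summable_prod_of_nonneg hf).2
    ⟨fun b => (hfg b).summable, by simpa only [fun b => (hfg b).tsum_eq] using hg.summable⟩
  obtain rfl := hg.unique (hf_summable.hasSum.prod_fiberwise hfg)
  exact hf_summable.hasSum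

lemma tsum_tsum_tsum_of_hasSum {f : α × β × γ → ℝ} {s : ℝ} (h : HasSum f s) :
    ∑' a, ∑' b, ∑' c, f (a, b, c) = s := by
  rw [← h.tsum_eq, h.summable.tsum_prod]
  exact tsum_congr fun a => (h.summable.prod_factor a).tsum_prod.symm

lemma tsum_tsum_tsum_tsum_of_hasSum {f : α × β × γ × δ → ℝ} {s : ℝ} (h : HasSum f s) :
    ∑' a, ∑' b, ∑' c, ∑' d, f (a, b, c, d) = s := by
  rw [← h.tsum_eq, h.summable.tsum_prod]
  exact tsum_congr fun a => tsum_tsum_tsum_of_hasSum (h.summable.prod_factor a).hasSum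

end Fubini

section Arm

variable {q : ℝ}

noncomputable def armTerm (q : ℝ) (m a b c : ℕ) : ℝ :=
  q ^ (m * a + a * b + b * c + a + b + c) / (qpR q a * qpR q b * qpR q c)

noncomputable def armSum (q : ℝ) (m : ℕ) : ℝ :=
  (qpR q m - qpInfR q) / (qpInfR q ^ 2 * q ^ (m + 1))

lemma armTerm_nonneg (hq₀ : 0 ≤ q) (hq₁ : q < 1) (m a b c : ℕ) :
    0 ≤ armTerm q m a b c := by
  have := qpR_pos hq₀ hq₁ a
  have := qpR_pos hq₀ hq₁ b
  have := qpR_pos hq₀ hq₁ c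
  unfold armTerm
  positivity

lemma armSum_nonneg (hq₀ : 0 ≤ q) (hq₁ : q < 1) (m : ℕ) : 0 ≤ armSum q m :=
  div_nonneg (sub_nonneg.2 (qpInfR_le_qpR hq₀ hq₁ m)) (by positivity)

lemma hasSum_armTerm (hq₀ : 0 < q) (hq₁ : q < 1) (m : ℕ) :
    HasSum (fun p : ℕ × ℕ × ℕ => armTerm q m p.1 p.2.1 p.2.2) (armSum q m) := by
  have he := (qpInfR_pos hq₀.le hq₁).ne'
  have hnonneg (a b c : ℕ) := armTerm_nonneg hq₀.le hq₁ m a b c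
  have hsum_c (a b : ℕ) : HasSum (fun c => armTerm q m a b c)
      ((q ^ (m + 1)) ^ a * (q ^ (a + 1)) ^ b / (qpR q a * qpInfR q)) := by
    have hb := (qpR_pos hq₀.le hq₁ b).ne'
    have h := (hasSum_pow_div_qpR hq₀.le hq₁ b).mul_left
      (q ^ (m * a + a * b + a + b) / (qpR q a * qpR q b))
    rw [show q ^ (m * a + a * b + a + b) / (qpR q a * qpR q b) * (qpR q b / qpInfR q)
      = (q ^ (m + 1)) ^ a * (q ^ (a + 1)) ^ b / (qpR q a * qpInfR q) by field_simp; ring] at h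
    exact h.congr_fun fun c => by rw [armTerm]; ring
  have hsum_b (a : ℕ) :
      HasSum (fun b => (q ^ (m + 1)) ^ a * (q ^ (a + 1)) ^ b / (qpR q a * qpInfR q))
        ((q ^ (m + 1)) ^ a / (qpR q (a + 1) * qpInfR q)) := by
    have := (qpR_pos hq₀.le hq₁ a).ne'
    have := (one_sub_pow_succ_pos hq₀.le hq₁ a).ne'
    have h := (hasSum_geometric_of_lt_one (pow_nonneg hq₀.le (a + 1))
      (pow_lt_one₀ hq₀.le hq₁ a.succ_ne_zero)).mul_left
      ((q ^ (m + 1)) ^ a / (qpR q a * qpInfR q))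
    rw [show (q ^ (m + 1)) ^ a / (qpR q a * qpInfR q) * (1 - q ^ (a + 1))⁻¹
      = (q ^ (m + 1)) ^ a / (qpR q (a + 1) * qpInfR q) by rw [qpR_succ]; field_simp] at h
    exact h.congr_fun fun b => by ring
  have hsum_a : HasSum (fun a => (q ^ (m + 1)) ^ a / (qpR q (a + 1) * qpInfR q)) (armSum q m) := by
    have h := (hasSum_pow_div_qpR_succ hq₀ hq₁ m).div_const (qpInfR q)
    rw [show (qpR q m / qpInfR q - 1) / q ^ (m + 1) / qpInfR q = armSum q m by
      unfold armSum; field_simp] at h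
    exact h.congr_fun fun a => by rw [div_div]
  exact hasSum_prod_of_nonneg (fun p => hnonneg _ _ _) (fun a => hasSum_prod_of_nonneg
    (fun p => hnonneg _ _ _) (hsum_c a) (hsum_b a)) hsum_a

end Arm

section CentralTerm

variable {q : ℝ}

noncomputable def centralTerm (q : ℝ) (n : ℕ) : ℝ :=
  (qpR q n - qpInfR q) ^ 2 / (qpR q n * q ^ (n + 2))

lemma centralTerm_nonneg (hq₀ : 0 ≤ q) (hq₁ : q < 1) (n : ℕ) : 0 ≤ centralTerm q n := by
  have := qpR_pos hq₀ hq₁ n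
  unfold centralTerm
  positivity

lemma centralTerm_le_qpR_div (hq₀ : 0 < q) (hq₁ : q < 1) (n : ℕ) :
    centralTerm q n ≤ qpR q n / q ^ (n + 2) := by
  have hN := qpR_pos hq₀.le hq₁ n
  calc centralTerm q n ≤ qpR q n ^ 2 / (qpR q n * q ^ (n + 2)) := by
        refine div_le_div_of_nonneg_right (pow_le_pow_left₀ ?_ ?_ 2) (by positivity)
        · exact sub_nonneg.2 (qpInfR_le_qpR hq₀.le hq₁ n)
        · exact sub_le_self _ (qpInfR_pos hq₀.le hq₁).le
    _ = qpR q n / q ^ (n + 2) := by rw [sq, mul_div_mul_left _ _ hN.ne']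

lemma centralTerm_le_qpR_mul (hq₀ : 0 < q) (hq₁ : q < 1) (n : ℕ) :
    centralTerm q n ≤ qpR q n * q ^ n / (1 - q) ^ 2 := by
  have hN := qpR_pos hq₀.le hq₁ n
  have h1q : 0 < 1 - q := sub_pos.2 hq₁
  calc centralTerm q n ≤ (qpR q n * q ^ (n + 1) / (1 - q)) ^ 2 / (qpR q n * q ^ (n + 2)) := by
        refine div_le_div_of_nonneg_right (pow_le_pow_left₀ ?_ ?_ 2) (by positivity)
        · exact sub_nonneg.2 (qpInfR_le_qpR hq₀.le hq₁ n)
        · exact qpR_sub_qpInfR_le hq₀.le hq₁ n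
    _ = qpR q n * q ^ n / (1 - q) ^ 2 := by
        field_simp
        ring

lemma summable_centralTerm (hq₀ : 0 < q) (hq₁ : q < 1) : Summable (centralTerm q) :=
  ((summable_geometric_of_lt_one hq₀.le hq₁).div_const ((1 - q) ^ 2)).of_nonneg_of_le
    (centralTerm_nonneg hq₀.le hq₁) fun n => (centralTerm_le_qpR_mul hq₀ hq₁ n).trans <|
      div_le_div_of_nonneg_right
        (mul_le_of_le_one_left (pow_nonneg hq₀.le n) (qpR_le_one hq₀.le hq₁.le n))
        (sq_nonneg _)

lemma tsum_centralTerm_add_three_le (hq₀ : 0 < q) (hq₁ : q < 1) :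
    ∑' n, centralTerm q (n + 3) ≤ qpR q 3 / (q * (1 - q) ^ 2) := by
  have h1q : 0 < 1 - q := sub_pos.2 hq₁
  calc ∑' n, centralTerm q (n + 3) ≤ (qpR q 3 - qpInfR q) / (q * (1 - q) ^ 2) := by
        refine hasSum_le (fun n => ?_)
          ((summable_nat_add_iff 3).mpr (summable_centralTerm hq₀ hq₁)).hasSum
          ((hasSum_qpR_mul_pow hq₀.le hq₁ 3).div_const _)
        calc centralTerm q (n + 3) ≤ qpR q (n + 3) * q ^ (n + 3) / (1 - q) ^ 2 :=
              centralTerm_le_qpR_mul hq₀ hq₁ _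
          _ = qpR q (n + 3) * q ^ (n + 3 + 1) / (q * (1 - q) ^ 2) := by
              field_simp
              ring
    _ ≤ qpR q 3 / (q * (1 - q) ^ 2) :=
        div_le_div_of_nonneg_right (sub_le_self _ (qpInfR_pos hq₀.le hq₁).le) (by positivity)

lemma qpR_three_le (hq₀ : 0 ≤ q) (hq₁ : q ≤ 1) : qpR q 3 ≤ 6 * (1 - q) ^ 3 := by
  have h : qpR q 3 = (1 + q) * (1 + q + q ^ 2) * (1 - q) ^ 3 := by
    simp only [qpR_succ, qpR_zero]
    ring
  rw [h]
  exact mul_le_mul_of_nonneg_right (by nlinarith) (pow_nonneg (sub_nonneg.2 hq₁) 3)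

lemma abs_tsum_centralTerm_sub_one_le (hq : 1 / 2 ≤ q) (hq₁ : q < 1) :
    |∑' n, centralTerm q n - 1| ≤ 44 * (1 - q) := by
  have hq₀ : 0 < q := by linarith
  have h1q : 0 < 1 - q := sub_pos.2 hq₁
  have he₀ := qpInfR_pos hq₀.le hq₁
  have he₁ : qpInfR q ≤ 1 - q := by
    simpa [qpR_succ, qpR_zero] using qpInfR_le_qpR hq₀.le hq₁ 1
  have hq2 : 1 / 4 ≤ q ^ 2 := by nlinarith
  have h₀ : |centralTerm q 0 - 1| ≤ 8 * (1 - q) := by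
    have hc : centralTerm q 0 = (1 - qpInfR q) ^ 2 / q ^ 2 := by simp [centralTerm, qpR_zero]
    have hlow : 1 - 2 * (1 - q) ≤ (1 - qpInfR q) ^ 2 / q ^ 2 := by
      rw [le_div_iff₀ (by positivity)]
      nlinarith
    have hup : (1 - qpInfR q) ^ 2 / q ^ 2 ≤ 1 + 8 * (1 - q) := by
      rw [div_le_iff₀ (by positivity)]
      nlinarith
    rw [hc, abs_le]
    constructor <;> linarith
  have h₁ : centralTerm q 1 ≤ 8 * (1 - q) := by
    refine (centralTerm_le_qpR_div hq₀ hq₁ 1).trans ?_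
    rw [div_le_iff₀ (by positivity)]
    norm_num [qpR_succ, qpR_zero]
    nlinarith [mul_le_mul_of_nonneg_left (show 1 / 8 ≤ q ^ 3 by nlinarith) h1q.le]
  have h₂ : centralTerm q 2 ≤ 16 * (1 - q) := by
    refine (centralTerm_le_qpR_div hq₀ hq₁ 2).trans ?_
    rw [div_le_iff₀ (by positivity)]
    norm_num [qpR_succ, qpR_zero]
    nlinarith [mul_le_mul_of_nonneg_left (show 1 / 16 ≤ q ^ 4 by nlinarith) h1q.le,
      mul_nonneg h1q.le (sq_nonneg q)]
  have htail : ∑' n, centralTerm q (n + 3) ≤ 12 * (1 - q) := by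
    refine (tsum_centralTerm_add_three_le hq₀ hq₁).trans ?_
    rw [div_le_iff₀ (by positivity)]
    nlinarith [qpR_three_le hq₀.le hq₁.le,
      mul_nonneg (show 0 ≤ 2 * q - 1 by linarith) (pow_pos h1q 3).le]
  have htail₀ : 0 ≤ ∑' n, centralTerm q (n + 3) :=
    tsum_nonneg fun n => centralTerm_nonneg hq₀.le hq₁ _
  rw [← (summable_centralTerm hq₀ hq₁).sum_add_tsum_nat_add 3]
  simp only [Finset.sum_range_succ, Finset.sum_range_zero, zero_add]
  have := centralTerm_nonneg hq₀.le hq₁ 1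
  have := centralTerm_nonneg hq₀.le hq₁ 2
  rw [abs_le] at h₀ ⊢
  constructor <;> linarith

end CentralTerm

section Identity

variable {q : ℝ}

lemma HA7_summand_eq (q : ℝ) (n₁ n₂ n₃ n₄ n₅ n₆ n₇ : ℕ) :
    q ^ (n₁ * n₂ + n₂ * n₃ + n₃ * n₄ + n₄ * n₅ + n₅ * n₆ + n₆ * n₇
          + n₁ + n₂ + n₃ + n₄ + n₅ + n₆ + n₇) /
      (qpR q n₁ * qpR q n₂ * qpR q n₃ * qpR q n₄ * qpR q n₅ * qpR q n₆ * qpR q n₇)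
    = armTerm q n₄ n₃ n₂ n₁ * (q ^ n₄ / qpR q n₄) * armTerm q n₄ n₅ n₆ n₇ := by
  simp only [armTerm]
  ring

lemma centralTerm_eq_armSum (hq₀ : 0 < q) (hq₁ : q < 1) (n : ℕ) :
    centralTerm q n = qpInfR q ^ 4 * (armSum q n * (q ^ n / qpR q n * armSum q n)) := by
  have := (qpR_pos hq₀.le hq₁ n).ne'
  have := (qpInfR_pos hq₀.le hq₁).ne'
  simp only [armSum, centralTerm]
  field_simp
  ring

lemma qpInfR_pow_four_mul_HA7 (hq₀ : 0 < q) (hq₁ : q < 1) :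
    qpInfR q ^ 4 * HA7 q = ∑' n, centralTerm q n := by
  have he := (qpInfR_pos hq₀.le hq₁).ne'
  have harm (m : ℕ) : ∑' a, ∑' b, ∑' c, armTerm q m a b c = armSum q m :=
    tsum_tsum_tsum_of_hasSum (hasSum_armTerm hq₀ hq₁ m)
  set c : ℕ → ℝ := fun n => q ^ n / qpR q n * armSum q n
  -- The iterated sum has `n₁` outermost, but the arm `n₃ — n₂ — n₁` is summed from `n₁`
  -- inwards: go through the product space, where nonnegativity makes the sum absolute.
  have hprod :
      HasSum (fun p : ℕ × ℕ × ℕ × ℕ => armTerm q p.1 p.2.1 p.2.2.1 p.2.2.2 * c p.1)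
        ((∑' n, centralTerm q n) / qpInfR q ^ 4) := by
    refine hasSum_prod_of_nonneg (fun p => ?_)
      (fun n => (hasSum_armTerm hq₀ hq₁ n).mul_right _) ?_
    · have := qpR_pos hq₀.le hq₁ p.1
      have := armTerm_nonneg hq₀.le hq₁ p.1 p.2.1 p.2.2.1 p.2.2.2
      have := armSum_nonneg hq₀.le hq₁ p.1
      positivity
    · refine ((summable_centralTerm hq₀ hq₁).hasSum.div_const _).congr_fun fun n => ?_
      rw [centralTerm_eq_armSum hq₀ hq₁ n]
      field_simp
      ring
  let rev : ℕ × ℕ × ℕ × ℕ ≃ ℕ × ℕ × ℕ × ℕ :=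
    ⟨fun p => (p.2.2.2, p.2.2.1, p.2.1, p.1), fun p => (p.2.2.2, p.2.2.1, p.2.1, p.1),
      fun _ => rfl, fun _ => rfl⟩
  have hHA7 : HA7 q = (∑' n, centralTerm q n) / qpInfR q ^ 4 := by
    simp only [HA7, HA7_summand_eq]
    simp only [mul_assoc, tsum_mul_left, harm]
    exact tsum_tsum_tsum_tsum_of_hasSum (rev.hasSum_iff.mpr hprod)
  rw [hHA7]
  field_simp

end Identity

theorem HA7_asymptotic :
    ∃ C > (0 : ℝ), ∃ δ > (0 : ℝ), ∀ t : ℝ, 0 < t → t < δ →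
      |(qpInfR (Real.exp (-t))) ^ 4 * HA7 (Real.exp (-t)) - 1| ≤ C * t := by
  refine ⟨44, by norm_num, 1 / 2, by norm_num, fun t ht₀ htδ => ?_⟩
  have hq₁ : Real.exp (-t) < 1 := Real.exp_lt_one_iff.2 (neg_lt_zero.2 ht₀)
  have hq_ge : 1 - t ≤ Real.exp (-t) := by linarith [Real.add_one_le_exp (-t)]
  rw [qpInfR_pow_four_mul_HA7 (Real.exp_pos _) hq₁]
  calc _ ≤ 44 * (1 - Real.exp (-t)) := abs_tsum_centralTerm_sub_one_le (by linarith) hq₁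
    _ ≤ 44 * t := by linarith
end
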